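/- arXiv:0705.4203 — 5 statements merged into one kernel-verified Lean document; each statement's English description precedes it below -/
import Mathlib

section
/- For all x, y ∈ Σ, the following are equivalent: (i) there exists an integer n₀ ≥ 1 with y = σ^{n₀}x; (ii) the hitting time sequence (τ_k(x,y))_{k≥1} is bounded, i.e. there is K < ∞ with τ_k(x,y) ≤ K for all k ≥ 1. -/
open Filter MeasureTheory Set
open scoped ENNReal

noncomputable section

/-- The one-sided full shift space on two symbols. -/
abbrev Sig : Type := ℕ → Bool

/-- The metric `d(x,y) = 2^{-n}` where `n` is the first index at which `x` and `y` differ. -/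
noncomputable instance : MetricSpace Sig :=
  PiNat.metricSpaceOfDiscreteUniformity fun _ => rfl

/-- The shift map. -/
def shift (x : Sig) : Sig := fun n => x (n + 1)

/-- The cylinder of length `n` containing `x`. -/
def cylinder (x : Sig) (n : ℕ) : Set Sig := {y : Sig | ∀ i < n, y i = x i}

/-- The Birkhoff sum `S_n φ(x)`. -/
def birkhoff (φ : Sig → ℝ) (n : ℕ) (x : Sig) : ℝ :=
  ∑ j ∈ Finset.range n, φ (shift^[j] x)

/-- `φ` is Hölder continuous. -/
def IsHolder (φ : Sig → ℝ) : Prop :=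
  ∃ c > (0 : ℝ), ∃ a > (0 : ℝ), ∀ x y : Sig, |φ x - φ y| ≤ c * dist x y ^ a

/-- `μ` is a Gibbs measure for the potential `φ` with Gibbs constant `γ > 1`:
`μ` is an invariant Borel probability measure and
`γ⁻¹ 2^{S_nφ(x)} ≤ μ(C_n(x)) ≤ γ 2^{S_nφ(x)}` for all `x` and `n ≥ 1`. -/
def IsGibbs (φ : Sig → ℝ) (γ : ℝ) (μ : Measure Sig) : Prop :=
  1 < γ ∧ IsProbabilityMeasure μ ∧ Measure.map shift μ = μ ∧
    ∀ (x : Sig) (n : ℕ), 1 ≤ n →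
      ENNReal.ofReal (γ⁻¹ * 2 ^ birkhoff φ n x) ≤ μ (cylinder x n) ∧
      μ (cylinder x n) ≤ ENNReal.ofReal (γ * 2 ^ birkhoff φ n x)

/-- The first hitting time `τ(x,C) = inf {l ≥ 1 : σ^l x ∈ C}`, equal to `∞` if no such `l`. -/
def hitTime (x : Sig) (C : Set Sig) : ℕ∞ :=
  sInf {m : ℕ∞ | ∃ l : ℕ, m = l ∧ 1 ≤ l ∧ shift^[l] x ∈ C}

/-- Base 2 logarithm on `ℕ∞` with values in `ℝ≥0∞`. -/
def elog2 (t : ℕ∞) : ℝ≥0∞ :=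
  WithTop.recTopCoe ⊤ (fun n : ℕ => ENNReal.ofReal (Real.logb 2 n)) t

/-- `α(x,y) = liminf (1/n) log₂ τ_n(x,y)`. -/
def alpha (x y : Sig) : ℝ≥0∞ :=
  Filter.atTop.liminf fun n : ℕ => elog2 (hitTime x (cylinder y n)) / (n : ℝ≥0∞)

/-- `- log₂ r`, valued in `ℝ≥0∞` (with `-log₂ 0 = ∞`). -/
def negLog2 (r : ℝ≥0∞) : ℝ≥0∞ :=
  if r = 0 then ⊤ else ENNReal.ofReal (-Real.logb 2 r.toReal)

/-- Lower local entropy `h̲_μ(y) = liminf -(1/n) log₂ μ(C_n(y))`. -/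
def lowerLocalEntropy (μ : Measure Sig) (y : Sig) : ℝ≥0∞ :=
  Filter.atTop.liminf fun n : ℕ => negLog2 (μ (cylinder y n)) / (n : ℝ≥0∞)

/-- Upper local entropy `h̄_μ(y) = limsup -(1/n) log₂ μ(C_n(y))`. -/
def upperLocalEntropy (μ : Measure Sig) (y : Sig) : ℝ≥0∞ :=
  Filter.atTop.limsup fun n : ℕ => negLog2 (μ (cylinder y n)) / (n : ℝ≥0∞)

/-- The local entropy of `μ` at `y` exists and equals `t`. -/
def HasLocalEntropy (μ : Measure Sig) (y : Sig) (t : ℝ) : Prop :=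
  Tendsto (fun n : ℕ => -Real.logb 2 (μ (cylinder y n)).toReal / n) atTop (nhds t)

/-- The entropy spectrum `E(t) = dim_H {y : h_{μ}(y) = t}`. -/
def entropySpectrum (μ : Measure Sig) (t : ℝ) : ℝ≥0∞ :=
  dimH {y : Sig | HasLocalEntropy μ y t}

/-- The circle `ℝ/ℤ`. -/
abbrev Circle1 : Type := AddCircle (1 : ℝ)

/-- The natural projection `π(y) = Σ y_i 2^{-(i+1)}` from `Σ` to the circle. -/
def piProj (y : Sig) : Circle1 :=
  ((∑' i : ℕ, if y i then ((2 : ℝ) ^ (i + 1))⁻¹ else 0 : ℝ) : Circle1)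

/-- The doubling map `T s = 2s (mod 1)`. -/
def doubling (s : Circle1) : Circle1 := s + s

/-- `I^κ(s)`: points `t` with `‖T^n s − t‖ < n^{-κ}` for infinitely many `n`. -/
def Icirc (κ : ℝ) (s : Circle1) : Set Circle1 :=
  {t : Circle1 | ∃ᶠ n : ℕ in atTop, ‖doubling^[n] s - t‖ < (n : ℝ) ^ (-κ)}

/-- `F^κ(s)` is the complement of `I^κ(s)`. -/
def Fcirc (κ : ℝ) (s : Circle1) : Set Circle1 := (Icirc κ s)ᶜ

/-- `e⁺ = sup ∫(−φ)dν` over invariant probability measures. -/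
def ePlus (φ : Sig → ℝ) : ℝ :=
  sSup {e : ℝ | ∃ ν : Measure Sig, IsProbabilityMeasure ν ∧ Measure.map shift ν = ν ∧
    e = ∫ z, (-φ z) ∂ν}

/-- The symbolic set `I^κ(x)`. -/
def Isymb (κ : ℝ) (x : Sig) : Set Sig :=
  {y : Sig | ∃ᶠ n : ℕ in atTop, y ∈ cylinder (shift^[n] x) ⌊κ * Real.logb 2 n⌋₊}

/-- The symbolic set `F^κ(x)`. -/
def Fsymb (κ : ℝ) (x : Sig) : Set Sig := (Isymb κ x)ᶜ

end

/-- `y` is on the forward orbit of `x` iff the hitting time sequence is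
bounded. -/
theorem statement6 (x y : Sig) :
    (∃ n₀ : ℕ, 1 ≤ n₀ ∧ y = shift^[n₀] x) ↔
      (∃ K : ℕ, ∀ k : ℕ, 1 ≤ k → hitTime x (cylinder y k) ≤ (K : ℕ∞)) := by
  constructor
  · rintro ⟨n₀, hn₀, rfl⟩
    exact ⟨n₀, fun k _ => sInf_le ⟨n₀, rfl, hn₀, fun i _ => rfl⟩⟩
  · rintro ⟨K, hK⟩
    have h : ∀ k : ℕ, ∃ l : ℕ, 1 ≤ l ∧ l ≤ K ∧ shift^[l] x ∈ cylinder y (k + 1) := by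
      intro k
      by_contra hcon
      push_neg at hcon
      have hlow : ((K + 1 : ℕ) : ℕ∞) ≤ hitTime x (cylinder y (k + 1)) := by
        apply le_sInf
        rintro m ⟨l, rfl, hl1, hl2⟩
        have : K + 1 ≤ l := by
          by_contra h'
          exact hcon l hl1 (by omega) hl2
        exact_mod_cast this
      have := hlow.trans (hK (k + 1) (by omega))
      have : K + 1 ≤ K := by exact_mod_cast this
      omega
    choose l hl1 hlK hmem using h
    have hfin : ∃ m : Fin (K + 1), {k : ℕ | (⟨l k, by have := hlK k; omega⟩ : Fin (K + 1)) = m}.Infinite := by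
      obtain ⟨m, hm⟩ := Finite.exists_infinite_fiber
        (fun k : ℕ => (⟨l k, by have := hlK k; omega⟩ : Fin (K + 1)))
      exact ⟨m, Set.infinite_coe_iff.mp hm⟩
    obtain ⟨m, hm⟩ := hfin
    refine ⟨m.val, ?_, ?_⟩
    · obtain ⟨k, hk, _⟩ := hm.exists_gt 0
      have : l k = m.val := congrArg Fin.val hk
      have := hl1 k
      omega
    · funext i
      obtain ⟨k, hk, hki⟩ := hm.exists_gt i
      have hlm : l k = m.val := congrArg Fin.val hk
      have := hmem k i (by omega)
      rw [hlm] at this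
      exact this.symm
end

section
/- For every x ∈ Σ and every κ > 0, writing O⁺(x) := {σ^n x : n ≥ 1}, the following inclusions hold: {y ∈ Σ : α(x,y) > 1/κ} ⊆ F^κ(x) ⊆ {y ∈ Σ : α(x,y) ≥ 1/κ} ∪ O⁺(x), and {y ∈ Σ : α(x,y) < 1/κ} \ O⁺(x) ⊆ I^κ(x) ⊆ {y ∈ Σ : α(x,y) ≤ 1/κ}. -/
open Filter MeasureTheory Set
open scoped ENNReal

lemma elog2_coe (n : ℕ) : elog2 (n : ℕ∞) = ENNReal.ofReal (Real.logb 2 n) := rfl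

lemma mem_cylinder_comm {x y : Sig} {n : ℕ} : y ∈ cylinder x n ↔ x ∈ cylinder y n := by
  constructor <;> intro h i hi <;> exact (h i hi).symm

lemma hitTime_le {x : Sig} {C : Set Sig} {l : ℕ} (hl : 1 ≤ l) (h : shift^[l] x ∈ C) :
    hitTime x C ≤ l := sInf_le ⟨l, rfl, hl, h⟩

lemma hitTime_spec {x : Sig} {C : Set Sig} (h : hitTime x C ≠ ⊤) :
    ∃ l : ℕ, hitTime x C = (l : ℕ∞) ∧ 1 ≤ l ∧ shift^[l] x ∈ C := by
  have hne : {m : ℕ∞ | ∃ l : ℕ, m = (l : ℕ∞) ∧ 1 ≤ l ∧ shift^[l] x ∈ C}.Nonempty := by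
    by_contra hc
    rw [Set.not_nonempty_iff_eq_empty] at hc
    exact h (by simp [hitTime, hc])
  exact csInf_mem hne

lemma elog2_le_of_le {t : ℕ∞} {n : ℕ} (h : t ≤ (n : ℕ∞)) :
    elog2 t ≤ ENNReal.ofReal (Real.logb 2 n) := by
  lift t to ℕ using (h.trans_lt (WithTop.coe_lt_top n)).ne
  rw [elog2_coe]
  have hln : (t : ℕ) ≤ n := by exact_mod_cast h
  rcases Nat.eq_zero_or_pos t with h0 | h1
  · simp [h0]
  · exact ENNReal.ofReal_le_ofReal <| Real.logb_le_logb_of_le one_lt_two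
      (by exact_mod_cast h1) (by exact_mod_cast hln)

/-- Main lemma A : points of `Isymb` have `α ≤ 1/κ`. -/
lemma lemA {x y : Sig} {κ : ℝ} (hκ : 0 < κ) (hy : y ∈ Isymb κ x) :
    alpha x y ≤ ENNReal.ofReal (1 / κ) := by
  have hy' : ∃ᶠ n : ℕ in atTop, y ∈ cylinder (shift^[n] x) ⌊κ * Real.logb 2 n⌋₊ := hy
  refine ENNReal.le_of_forall_pos_le_add fun ε hε _ => ?_
  have hε' : (0:ℝ) < ε := hε
  set c : ℝ := 1 / κ + ε with hc
  have hcpos : 0 < c := by positivity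
  have hgoal : ENNReal.ofReal (1/κ) + (ε : ℝ≥0∞) = ENNReal.ofReal c := by
    rw [hc, ENNReal.ofReal_add (by positivity) ε.coe_nonneg, ENNReal.ofReal_coe_nnreal]
  rw [hgoal]
  refine liminf_le_of_frequently_le' ?_
  rw [frequently_atTop]
  intro M
  set L₀ : ℝ := max ((max M 1 : ℕ) / κ) ((1/κ + ε) / (ε * κ)) with hL₀
  obtain ⟨n, hnN, hcyl⟩ := (frequently_atTop.mp hy') (⌈(2:ℝ) ^ L₀⌉₊ + 1)
  have hn1 : 1 ≤ n := le_trans (Nat.le_add_left 1 _) hnN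
  have hnpos : (0:ℝ) < n := by exact_mod_cast hn1
  set L : ℝ := Real.logb 2 n with hLdef
  have h2L : (2:ℝ) ^ L₀ ≤ n := by
    calc (2:ℝ) ^ L₀ ≤ (⌈(2:ℝ)^L₀⌉₊ : ℝ) := Nat.le_ceil _
    _ ≤ n := by exact_mod_cast le_trans (Nat.le_succ _) hnN
  have hL : L₀ ≤ L := (Real.le_logb_iff_rpow_le one_lt_two hnpos).mpr h2L
  set m : ℕ := ⌊κ * L⌋₊ with hm
  have hmM : (max M 1 : ℕ) ≤ m := by
    apply Nat.le_floor
    calc ((max M 1 : ℕ) : ℝ) = κ * (((max M 1 : ℕ) : ℝ)/κ) := by field_simp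
    _ ≤ κ * L := by
        apply mul_le_mul_of_nonneg_left _ hκ.le
        exact le_trans (le_max_left _ _) hL
  have hm1 : 1 ≤ m := le_trans (le_max_right M 1) hmM
  have hfloor : κ * L - 1 < (m:ℝ) := Nat.sub_one_lt_floor _
  have hLbig : (1/κ + (ε:ℝ)) / (ε * κ) ≤ L := le_trans (le_max_right _ _) hL
  have heps : 1/κ + (ε:ℝ) ≤ (ε:ℝ) * κ * L := by
    rw [div_le_iff₀ (by positivity)] at hLbig
    linarith
  have expand : c * (κ * L - 1) = L + ((ε:ℝ) * κ * L - (1/κ + (ε:ℝ))) := by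
    rw [hc]; field_simp; ring
  have hLc : L ≤ c * m := by
    calc L ≤ c * (κ*L - 1) := by rw [expand]; linarith
    _ ≤ c * m := mul_le_mul_of_nonneg_left hfloor.le hcpos.le
  refine ⟨m, le_trans (le_max_left M 1) hmM, ?_⟩
  have hht : hitTime x (cylinder y m) ≤ (n : ℕ∞) :=
    hitTime_le hn1 (mem_cylinder_comm.mp hcyl)
  have he := elog2_le_of_le hht
  rw [ENNReal.div_le_iff_le_mul (Or.inl (by exact_mod_cast Nat.one_le_iff_ne_zero.mp hm1))
    (Or.inl (ENNReal.natCast_ne_top m))]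
  calc elog2 (hitTime x (cylinder y m)) ≤ ENNReal.ofReal L := he
  _ ≤ ENNReal.ofReal (c * m) := ENNReal.ofReal_le_ofReal hLc
  _ = ENNReal.ofReal c * (m:ℝ≥0∞) := by
      rw [ENNReal.ofReal_mul hcpos.le, ENNReal.ofReal_natCast]

/-- Main lemma B : `α < 1/κ` and not on the orbit implies `Isymb`. -/
lemma lemB {x y : Sig} {κ : ℝ} (hκ : 0 < κ)
    (hα : alpha x y < ENNReal.ofReal (1/κ))
    (hO : ¬ ∃ n : ℕ, 1 ≤ n ∧ y = shift^[n] x) : y ∈ Isymb κ x := by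
  classical
  have hα' : atTop.liminf (fun m : ℕ => elog2 (hitTime x (cylinder y m)) / (m:ℝ≥0∞))
      < ENNReal.ofReal (1/κ) := hα
  have hf := frequently_lt_of_liminf_lt (by isBoundedDefault) hα'
  have hdiff : ∀ j : ℕ, 1 ≤ j → ∃ i, (shift^[j] x) i ≠ y i := by
    intro j hj
    by_contra hcon
    push_neg at hcon
    exact hO ⟨j, hj, funext fun i => (hcon i).symm⟩
  choose g hg using hdiff
  let f : ℕ → ℕ := fun j => if h : 1 ≤ j then g j h else 0
  have hfprop : ∀ j, (hj : 1 ≤ j) → shift^[j] x (f j) ≠ y (f j) := by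
    intro j hj; simp only [f, dif_pos hj]; exact hg j hj
  show ∃ᶠ n : ℕ in atTop, y ∈ cylinder (shift^[n] x) ⌊κ * Real.logb 2 n⌋₊
  rw [frequently_atTop]
  intro N
  set M : ℕ := (Finset.range (N+1)).sup f + 1 with hM
  obtain ⟨m, hmM, hm⟩ := (frequently_atTop.mp hf) (M + 1)
  have hm1 : 1 ≤ m := by omega
  have hmne0 : (m : ℝ≥0∞) ≠ 0 := by exact_mod_cast Nat.one_le_iff_ne_zero.mp hm1
  have hmnetop : (m : ℝ≥0∞) ≠ ⊤ := ENNReal.natCast_ne_top m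
  have hfin : hitTime x (cylinder y m) ≠ ⊤ := by
    intro htop
    rw [htop] at hm
    have : elog2 ⊤ = ⊤ := rfl
    rw [this, ENNReal.top_div_of_ne_top hmnetop] at hm
    exact (not_top_lt hm).elim
  obtain ⟨n, heq, hn1, hmem⟩ := hitTime_spec hfin
  rw [heq, elog2_coe] at hm
  have hdivlt : ENNReal.ofReal (Real.logb 2 n) < ENNReal.ofReal (1/κ) * (m:ℝ≥0∞) :=
    (ENNReal.div_lt_iff (Or.inl hmne0) (Or.inl hmnetop)).mp hm
  have hprod : ENNReal.ofReal (1/κ) * (m:ℝ≥0∞) = ENNReal.ofReal ((m:ℝ)/κ) := by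
    rw [← ENNReal.ofReal_natCast m, ← ENNReal.ofReal_mul (by positivity)]
    congr 1; ring
  rw [hprod] at hdivlt
  have hmpos : (0:ℝ) < m := by exact_mod_cast hm1
  have hlogb : Real.logb 2 n < (m:ℝ) / κ :=
    (ENNReal.ofReal_lt_ofReal_iff (by positivity)).mp hdivlt
  have hκlog : κ * Real.logb 2 n < (m:ℝ) := by
    rw [lt_div_iff₀ hκ] at hlogb
    linarith
  have hnN : N ≤ n := by
    by_contra hlt
    push_neg at hlt
    have hfj : f n < m := by
      have h1 : f n ≤ (Finset.range (N+1)).sup f :=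
        Finset.le_sup (Finset.mem_range.mpr (by omega))
      omega
    exact hfprop n hn1 (hmem (f n) hfj)
  refine ⟨n, hnN, ?_⟩
  intro i hi
  have him : i < m := by
    have h1 : ⌊κ * Real.logb 2 n⌋₊ ≤ ⌊(m:ℝ)⌋₊ := Nat.floor_mono hκlog.le
    rw [Nat.floor_natCast] at h1
    omega
  exact (hmem i him).symm

/-- Inclusions between `F^κ(x)`, `I^κ(x)` and level sets of `α(x,·)`. -/
theorem statement7 (x : Sig) (κ : ℝ) (hκ : 0 < κ) :
    {y : Sig | ENNReal.ofReal (1 / κ) < alpha x y} ⊆ Fsymb κ x ∧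
      Fsymb κ x ⊆ {y : Sig | ENNReal.ofReal (1 / κ) ≤ alpha x y} ∪
        {y : Sig | ∃ n : ℕ, 1 ≤ n ∧ y = shift^[n] x} ∧
      {y : Sig | alpha x y < ENNReal.ofReal (1 / κ)} \
          {y : Sig | ∃ n : ℕ, 1 ≤ n ∧ y = shift^[n] x} ⊆ Isymb κ x ∧
      Isymb κ x ⊆ {y : Sig | alpha x y ≤ ENNReal.ofReal (1 / κ)} := by
  refine ⟨?_, ?_, ?_, ?_⟩
  · intro y hy hI
    exact absurd (lemA hκ hI) (not_le.mpr hy)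
  · intro y hy
    by_contra h
    rw [Set.mem_union, not_or] at h
    obtain ⟨h1, h2⟩ := h
    exact hy (lemB hκ (not_le.mp h1) h2)
  · intro y hy
    exact lemB hκ hy.1 hy.2
  · intro y hy
    exact lemA hκ hy
end

section
/- Let φ : Σ → ℝ be Hölder continuous, let μ_φ be a Gibbs measure for φ, and let ν be any Borel probability measure on Σ. Then for μ_φ×ν-almost every pair (x,y) ∈ Σ×Σ: α(x,y) = h̲_{μ_φ}(y). -/
open Filter MeasureTheory Set
open scoped ENNReal

namespace Stmt10

lemma shift_iter (m : ℕ) (x : Sig) (i : ℕ) : shift^[m] x i = x (i + m) := by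
  induction m generalizing x with
  | zero => rfl
  | succ m ih =>
    rw [Function.iterate_succ_apply, ih]
    rfl

lemma measurable_shift : Measurable shift :=
  measurable_pi_lambda _ fun i => measurable_pi_apply (i + 1)

lemma measurable_shift_iter (m : ℕ) : Measurable (shift^[m]) :=
  measurable_shift.iterate m

lemma measurableSet_cylinder (x : Sig) (n : ℕ) : MeasurableSet (cylinder x n) := by
  have : cylinder x n = ⋂ i ∈ Finset.range n, {y : Sig | y i = x i} := by
    ext y; simp [_root_.cylinder]
  rw [this]
  refine MeasurableSet.biInter (Finset.range n).countable_toSet (fun i _ => ?_)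
  have : {y : Sig | y i = x i} = (fun y : Sig => y i) ⁻¹' {x i} := rfl
  rw [this]
  exact measurable_pi_apply i (measurableSet_singleton (x i))

lemma cylinder_congr {x x' : Sig} {n : ℕ} (h : ∀ i < n, x i = x' i) :
    cylinder x n = cylinder x' n := by
  ext y
  constructor <;> intro hy i hi
  · rw [hy i hi, h i hi]
  · rw [hy i hi, h i hi]

lemma birkhoff_add (φ : Sig → ℝ) (m n : ℕ) (x : Sig) :
    birkhoff φ (m + n) x = birkhoff φ m x + birkhoff φ n (shift^[m] x) := by
  unfold birkhoff
  rw [Finset.sum_range_add]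
  congr 1
  refine Finset.sum_congr rfl fun j _ => ?_
  rw [add_comm m j, Function.iterate_add_apply]

section Gibbs

variable {φ : Sig → ℝ} {γ : ℝ} {μ : Measure Sig} (hG : IsGibbs φ γ μ)

lemma gibbs_gamma_pos (hG : IsGibbs φ γ μ) : (0:ℝ) < γ := lt_trans one_pos hG.1

lemma preserved (hG : IsGibbs φ γ μ) {A : Set Sig} (hA : MeasurableSet A) (l : ℕ) :
    μ (shift^[l] ⁻¹' A) = μ A := by
  induction l with
  | zero => rfl
  | succ l ih =>
    rw [Function.iterate_succ, Set.preimage_comp]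
    have : μ (shift ⁻¹' (shift^[l] ⁻¹' A)) = (Measure.map shift μ) (shift^[l] ⁻¹' A) := by
      rw [Measure.map_apply measurable_shift ((measurable_shift_iter l) hA)]
    rw [this, hG.2.2.1, ih]

lemma cylinder_pos (hG : IsGibbs φ γ μ) (x : Sig) (n : ℕ) : 0 < μ (cylinder x n) := by
  rcases Nat.eq_zero_or_pos n with h | h
  · subst h
    have : cylinder x 0 = Set.univ := by
      ext y; simp [_root_.cylinder]
    rw [this]
    have := hG.2.1
    simp [measure_univ]
  · refine lt_of_lt_of_le ?_ (hG.2.2.2 x n h).1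
    have hγ : (0:ℝ) < γ⁻¹ := inv_pos.mpr (lt_trans one_pos hG.1)
    have h2 : (0:ℝ) < (2:ℝ) ^ birkhoff φ n x := Real.rpow_pos_of_pos two_pos _
    exact ENNReal.ofReal_pos.mpr (mul_pos hγ h2)

end Gibbs

end Stmt10
namespace Stmt10

lemma one_le_hitTime (x : Sig) (C : Set Sig) : 1 ≤ hitTime x C := by
  refine le_sInf fun m hm => ?_
  obtain ⟨l, rfl, hl, _⟩ := hm
  exact_mod_cast Nat.one_le_cast.mpr hl

lemma hitTime_le_iff {x : Sig} {C : Set Sig} {K : ℕ} :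
    hitTime x C ≤ (K : ℕ∞) ↔ ∃ l, 1 ≤ l ∧ l ≤ K ∧ shift^[l] x ∈ C := by
  constructor
  · intro h
    by_contra hc
    push_neg at hc
    have : ((K:ℕ∞) + 1) ≤ hitTime x C := by
      refine le_sInf fun m hm => ?_
      obtain ⟨l, rfl, hl, hmem⟩ := hm
      have : K + 1 ≤ l := by
        by_contra hlt
        push_neg at hlt
        exact (hc l hl (by omega)) hmem
      exact_mod_cast Nat.cast_le.mpr this
    have hKlt : (K:ℕ∞) < (K:ℕ∞) + 1 := (ENat.lt_add_one_iff (ENat.coe_ne_top K)).mpr le_rfl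
    have : (K:ℕ∞) < hitTime x C := lt_of_lt_of_le hKlt this
    exact absurd h (not_le.mpr this)
  · rintro ⟨l, hl1, hlK, hmem⟩
    exact le_trans (sInf_le ⟨l, rfl, hl1, hmem⟩) (by exact_mod_cast Nat.cast_le.mpr hlK)

lemma hitTime_eq_top_iff {x : Sig} {C : Set Sig} :
    hitTime x C = ⊤ ↔ ∀ l, 1 ≤ l → shift^[l] x ∉ C := by
  constructor
  · intro h l hl hmem
    have : hitTime x C ≤ (l : ℕ∞) := sInf_le ⟨l, rfl, hl, hmem⟩
    rw [h] at this
    exact absurd (eq_top_iff.mpr this) (by simp)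
  · intro h
    have : {m : ℕ∞ | ∃ l : ℕ, m = l ∧ 1 ≤ l ∧ shift^[l] x ∈ C} = ∅ := by
      ext m
      simp only [Set.mem_setOf_eq, Set.mem_empty_iff_false, iff_false]
      rintro ⟨l, rfl, hl, hmem⟩
      exact h l hl hmem
    rw [hitTime, this, sInf_empty]

lemma hitTime_eq_coe_iff {x : Sig} {C : Set Sig} {l : ℕ} :
    hitTime x C = (l : ℕ∞) ↔
      1 ≤ l ∧ shift^[l] x ∈ C ∧ ∀ j, 1 ≤ j → j < l → shift^[j] x ∉ C := by
  constructor
  · intro h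
    have hle : hitTime x C ≤ (l : ℕ∞) := le_of_eq h
    obtain ⟨j, hj1, hjl, hjmem⟩ := hitTime_le_iff.mp hle
    have hmin : ∀ j', 1 ≤ j' → j' < l → shift^[j'] x ∉ C := by
      intro j' hj'1 hj'l hj'mem
      have : hitTime x C ≤ (j' : ℕ∞) := sInf_le ⟨j', rfl, hj'1, hj'mem⟩
      rw [h] at this
      have : l ≤ j' := by exact_mod_cast this
      omega
    have : j = l := by
      by_contra hne
      exact hmin j hj1 (lt_of_le_of_ne hjl hne) hjmem
    subst this
    exact ⟨hj1, hjmem, hmin⟩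
  · rintro ⟨hl1, hmem, hmin⟩
    refine le_antisymm (sInf_le ⟨l, rfl, hl1, hmem⟩) (le_sInf ?_)
    rintro m ⟨j, rfl, hj1, hjmem⟩
    have : l ≤ j := by
      by_contra hlt
      exact hmin j hj1 (by omega) hjmem
    exact_mod_cast Nat.cast_le.mpr this

lemma setOf_hitTime_le_eq (C : Set Sig) (K : ℕ) :
    {x : Sig | hitTime x C ≤ (K : ℕ∞)} = ⋃ l ∈ Finset.Icc 1 K, shift^[l] ⁻¹' C := by
  ext x
  simp only [Set.mem_setOf_eq, hitTime_le_iff, Set.mem_iUnion, Finset.mem_Icc, Set.mem_preimage]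
  constructor
  · rintro ⟨l, h1, h2, h3⟩; exact ⟨l, ⟨h1, h2⟩, h3⟩
  · rintro ⟨l, ⟨h1, h2⟩, h3⟩; exact ⟨l, h1, h2, h3⟩

lemma measurableSet_hitTime_le (C : Set Sig) (hC : MeasurableSet C) (K : ℕ) :
    MeasurableSet {x : Sig | hitTime x C ≤ (K : ℕ∞)} := by
  rw [setOf_hitTime_le_eq]
  exact (Finset.Icc 1 K).measurableSet_biUnion fun l _ => (measurable_shift_iter l) hC

lemma measurableSet_hitTime_eq (C : Set Sig) (hC : MeasurableSet C) (t : ℕ∞) :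
    MeasurableSet {x : Sig | hitTime x C = t} := by
  induction t using WithTop.recTopCoe with
  | top =>
    have : {x : Sig | hitTime x C = ⊤} = ⋂ l ∈ {l : ℕ | 1 ≤ l}, (shift^[l] ⁻¹' C)ᶜ := by
      ext x
      simp only [Set.mem_setOf_eq, hitTime_eq_top_iff, Set.mem_iInter, Set.mem_compl_iff,
        Set.mem_preimage]
    show MeasurableSet {x : Sig | hitTime x C = (⊤ : ℕ∞)}
    rw [this]
    exact MeasurableSet.biInter (Set.to_countable _)
      fun l _ => ((measurable_shift_iter l) hC).compl
  | coe l =>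
    show MeasurableSet {x : Sig | hitTime x C = (l : ℕ∞)}
    have : {x : Sig | hitTime x C = (l : ℕ∞)} =
        (if 1 ≤ l then shift^[l] ⁻¹' C else ∅) ∩ ⋂ j ∈ {j : ℕ | 1 ≤ j ∧ j < l}, (shift^[j] ⁻¹' C)ᶜ := by
      ext x
      simp only [Set.mem_setOf_eq, hitTime_eq_coe_iff, Set.mem_inter_iff, Set.mem_iInter,
        Set.mem_compl_iff, Set.mem_preimage, Set.mem_setOf_eq]
      constructor
      · rintro ⟨h1, h2, h3⟩
        refine ⟨by rw [if_pos h1]; exact h2, fun j hj => h3 j hj.1 hj.2⟩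
      · rintro ⟨h1, h2⟩
        by_cases hl : 1 ≤ l
        · rw [if_pos hl] at h1
          exact ⟨hl, h1, fun j hj1 hjl => h2 j ⟨hj1, hjl⟩⟩
        · rw [if_neg hl] at h1
          exact absurd h1 (Set.notMem_empty x)
    rw [this]
    refine MeasurableSet.inter ?_ (MeasurableSet.biInter (Set.to_countable _)
      fun j _ => ((measurable_shift_iter j) hC).compl)
    split
    · exact (measurable_shift_iter l) hC
    · exact MeasurableSet.empty

/-- Union bound: `μ {τ ≤ K} ≤ K μ(C)`. -/
lemma measure_hitTime_le {φ : Sig → ℝ} {γ : ℝ} {μ : Measure Sig} (hG : IsGibbs φ γ μ)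
    (C : Set Sig) (hC : MeasurableSet C) (K : ℕ) :
    μ {x : Sig | hitTime x C ≤ (K : ℕ∞)} ≤ (K : ℝ≥0∞) * μ C := by
  rw [setOf_hitTime_le_eq]
  calc μ (⋃ l ∈ Finset.Icc 1 K, shift^[l] ⁻¹' C)
      ≤ ∑ l ∈ Finset.Icc 1 K, μ (shift^[l] ⁻¹' C) := measure_biUnion_finset_le _ _
    _ = ∑ l ∈ Finset.Icc 1 K, μ C := Finset.sum_congr rfl fun l _ => preserved hG hC l
    _ = (Finset.Icc 1 K).card • μ C := (Finset.sum_const _)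
    _ = (K : ℝ≥0∞) * μ C := by rw [Nat.card_Icc]; simp [nsmul_eq_mul]

end Stmt10
namespace Stmt10

variable {φ : Sig → ℝ} {γ : ℝ} {μ : Measure Sig}

/-- Quasi-independence for a single cylinder. -/
lemma quasi_indep_cyl (hG : IsGibbs φ γ μ) (x y : Sig) {m n : ℕ} (hm : 1 ≤ m) (hn : 1 ≤ n) :
    ENNReal.ofReal (γ⁻¹ ^ 3) * (μ (cylinder x m) * μ (cylinder y n)) ≤
      μ (cylinder x m ∩ shift^[m] ⁻¹' cylinder y n) := by
  have hγ : (0:ℝ) < γ := gibbs_gamma_pos hG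
  set w : Sig := fun i => if i < m then x i else y (i - m) with hw
  have hcylxw : cylinder x m = cylinder w m := by
    refine cylinder_congr fun i hi => ?_
    simp [hw, if_pos hi]
  have hshift : shift^[m] w = y := by
    funext i
    rw [shift_iter]
    simp [hw, Nat.add_sub_cancel]
  have hinter : cylinder x m ∩ shift^[m] ⁻¹' cylinder y n = cylinder w (m + n) := by
    ext z
    simp only [Set.mem_inter_iff, Set.mem_preimage, _root_.cylinder, Set.mem_setOf_eq]
    constructor
    · rintro ⟨h1, h2⟩ i hi
      by_cases him : i < m
      · rw [h1 i him, hw]; simp [if_pos him]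
      · push_neg at him
        have hin : i - m < n := by omega
        have := h2 (i - m) hin
        rw [shift_iter] at this
        rw [show i - m + m = i by omega] at this
        rw [this, hw]
        simp [if_neg (not_lt.mpr him)]
    · intro h
      constructor
      · intro i hi
        rw [h i (by omega), hw]
        simp [if_pos hi]
      · intro i hi
        rw [shift_iter, h (i + m) (by omega), hw]
        simp [Nat.add_sub_cancel]
  rw [hinter, hcylxw]
  have h1 := (hG.2.2.2 w (m + n) (by omega)).1
  have h2 := (hG.2.2.2 w m hm).2
  have h3 := (hG.2.2.2 y n hn).2
  calc ENNReal.ofReal (γ⁻¹ ^ 3) * (μ (cylinder w m) * μ (cylinder y n))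
      ≤ ENNReal.ofReal (γ⁻¹ ^ 3) *
        (ENNReal.ofReal (γ * 2 ^ birkhoff φ m w) * ENNReal.ofReal (γ * 2 ^ birkhoff φ n y)) := by
        exact mul_le_mul_right (mul_le_mul' h2 h3) _
    _ = ENNReal.ofReal (γ⁻¹ * 2 ^ birkhoff φ (m + n) w) := by
        rw [← ENNReal.ofReal_mul (by positivity), ← ENNReal.ofReal_mul (by positivity)]
        congr 1
        rw [birkhoff_add, hshift, Real.rpow_add two_pos]
        field_simp
    _ ≤ μ (cylinder w (m + n)) := h1

/-- Quasi-independence for a set determined by the first `m` coordinates. -/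
lemma quasi_indep (hG : IsGibbs φ γ μ) {m n : ℕ} (hm : 1 ≤ m) (hn : 1 ≤ n) {E : Set Sig}
    (hE : ∀ z z' : Sig, (∀ i < m, z i = z' i) → z ∈ E → z' ∈ E) (y : Sig) :
    ENNReal.ofReal (γ⁻¹ ^ 3) * (μ E * μ (cylinder y n)) ≤
      μ (E ∩ shift^[m] ⁻¹' cylinder y n) := by
  classical
  set ext : (Fin m → Bool) → Sig := fun w i => if h : i < m then w ⟨i, h⟩ else false with hext
  set S : Finset (Fin m → Bool) := Finset.univ.filter (fun w => ext w ∈ E) with hS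
  have hdecomp : E = ⋃ w ∈ S, cylinder (ext w) m := by
    ext z
    simp only [Set.mem_iUnion, _root_.cylinder, Set.mem_setOf_eq, hS, Finset.mem_filter,
      Finset.mem_univ, true_and, exists_prop]
    constructor
    · intro hz
      refine ⟨fun i => z i, ?_, ?_⟩
      · refine hE z _ (fun i hi => ?_) hz
        simp [hext, dif_pos hi]
      · intro i hi
        simp [hext, dif_pos hi]
    · rintro ⟨w, hwE, hagree⟩
      exact hE (ext w) z (fun i hi => (hagree i hi).symm) hwE
  have hdisj : (S : Set (Fin m → Bool)).PairwiseDisjoint fun w => cylinder (ext w) m := by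
    intro w _ w' _ hne
    refine Set.disjoint_left.mpr fun z hz hz' => hne ?_
    funext i
    have h1 := hz i.1 i.2
    have h2 := hz' i.1 i.2
    have e1 : ext w i.1 = w i := by simp [hext, dif_pos i.2]
    have e2 : ext w' i.1 = w' i := by simp [hext, dif_pos i.2]
    rw [h1, e1] at h2
    rw [← e2, h2]
  have hmeasE : μ E = ∑ w ∈ S, μ (cylinder (ext w) m) := by
    rw [hdecomp]
    exact measure_biUnion_finset hdisj fun w _ => measurableSet_cylinder _ _
  have hinter : E ∩ shift^[m] ⁻¹' cylinder y n =
      ⋃ w ∈ S, (cylinder (ext w) m ∩ shift^[m] ⁻¹' cylinder y n) := by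
    rw [hdecomp, Set.iUnion₂_inter]
  have hmeasI : μ (E ∩ shift^[m] ⁻¹' cylinder y n) =
      ∑ w ∈ S, μ (cylinder (ext w) m ∩ shift^[m] ⁻¹' cylinder y n) := by
    rw [hinter]
    refine measure_biUnion_finset (hdisj.mono ?_)
      fun w _ => (measurableSet_cylinder _ _).inter ((measurable_shift_iter m)
        (measurableSet_cylinder _ _))
    exact fun w => Set.inter_subset_left
  rw [hmeasE, hmeasI, Finset.sum_mul, Finset.mul_sum]
  exact Finset.sum_le_sum fun w _ => quasi_indep_cyl hG (ext w) y hm hn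

end Stmt10
namespace Stmt10

variable {φ : Sig → ℝ} {γ : ℝ} {μ : Measure Sig}

lemma measurableSet_missSet (y : Sig) (n J : ℕ) :
    MeasurableSet {x : Sig | ∀ j, 1 ≤ j → j ≤ J → shift^[j * n] x ∉ cylinder y n} := by
  have : {x : Sig | ∀ j, 1 ≤ j → j ≤ J → shift^[j * n] x ∉ cylinder y n} =
      ⋂ j ∈ {j : ℕ | 1 ≤ j ∧ j ≤ J}, (shift^[j * n] ⁻¹' cylinder y n)ᶜ := by
    ext x
    simp only [Set.mem_setOf_eq, Set.mem_iInter, Set.mem_compl_iff, Set.mem_preimage,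
      Set.mem_setOf_eq]
    exact ⟨fun h j hj => h j hj.1 hj.2, fun h j h1 h2 => h j ⟨h1, h2⟩⟩
  rw [this]
  exact MeasurableSet.biInter (Set.to_countable _)
    fun j _ => ((measurable_shift_iter _) (measurableSet_cylinder _ _)).compl

lemma miss_bound (hG : IsGibbs φ γ μ) (y : Sig) {n : ℕ} (hn : 1 ≤ n) (J : ℕ) :
    μ {x : Sig | ∀ j, 1 ≤ j → j ≤ J → shift^[j * n] x ∉ cylinder y n} ≤
      (1 - ENNReal.ofReal (γ⁻¹ ^ 3) * μ (cylinder y n)) ^ J := by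
  haveI : IsProbabilityMeasure μ := hG.2.1
  induction J with
  | zero =>
    have : {x : Sig | ∀ j, 1 ≤ j → j ≤ 0 → shift^[j * n] x ∉ cylinder y n} = Set.univ := by
      ext x; simp only [Set.mem_setOf_eq, Set.mem_univ, iff_true]; omega
    rw [this]
    simp
  | succ J ih =>
    set D : Set Sig := {x : Sig | ∀ j, 1 ≤ j → j ≤ J → shift^[j * n] x ∉ cylinder y n} with hD
    set m : ℕ := (J + 1) * n with hm
    have hsplit : {x : Sig | ∀ j, 1 ≤ j → j ≤ J + 1 → shift^[j * n] x ∉ cylinder y n} =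
        D \ shift^[m] ⁻¹' cylinder y n := by
      ext x
      simp only [Set.mem_setOf_eq, hD, Set.mem_diff, Set.mem_preimage, Set.mem_setOf_eq, hm]
      constructor
      · intro h
        exact ⟨fun j h1 h2 => h j h1 (by omega), h (J + 1) (by omega) le_rfl⟩
      · rintro ⟨h1, h2⟩ j hj1 hj2
        rcases Nat.lt_or_ge j (J + 1) with hj | hj
        · exact h1 j hj1 (by omega)
        · have : j = J + 1 := by omega
          subst this
          exact h2
    have hE : ∀ z z' : Sig, (∀ i < m, z i = z' i) → z ∈ D → z' ∈ D := by
      intro z z' hagree hz j hj1 hj2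
      intro hmem
      refine hz j hj1 hj2 ?_
      intro i hi
      rw [← hmem i hi, shift_iter, shift_iter, hagree]
      have : i + j * n < (J + 1) * n := by
        have : j * n ≤ J * n := Nat.mul_le_mul_right n hj2
        calc i + j * n < n + J * n := by omega
          _ = (J + 1) * n := by ring
      exact this
    have hq := quasi_indep hG (m := m) (Nat.mul_pos (Nat.succ_pos J) hn) hn hE y
    have hdecD : μ (D ∩ shift^[m] ⁻¹' cylinder y n) + μ (D \ shift^[m] ⁻¹' cylinder y n) = μ D :=
      measure_inter_add_diff D ((measurable_shift_iter m) (measurableSet_cylinder y n))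
    have hDfin : μ D ≠ ⊤ := (measure_lt_top μ D).ne
    have hAfin : μ (D ∩ shift^[m] ⁻¹' cylinder y n) ≠ ⊤ := (measure_lt_top μ _).ne
    have hB : μ (D \ shift^[m] ⁻¹' cylinder y n) = μ D - μ (D ∩ shift^[m] ⁻¹' cylinder y n) := by
      rw [← hdecD, ENNReal.add_sub_cancel_left hAfin]
    rw [hsplit, hB]
    calc μ D - μ (D ∩ shift^[m] ⁻¹' cylinder y n)
        ≤ μ D - ENNReal.ofReal (γ⁻¹ ^ 3) * (μ D * μ (cylinder y n)) := tsub_le_tsub_left hq _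
      _ = μ D * (1 - ENNReal.ofReal (γ⁻¹ ^ 3) * μ (cylinder y n)) := by
          rw [ENNReal.mul_sub (fun _ _ => hDfin), mul_one]
          congr 1
          ring
      _ ≤ (1 - ENNReal.ofReal (γ⁻¹ ^ 3) * μ (cylinder y n)) ^ J *
          (1 - ENNReal.ofReal (γ⁻¹ ^ 3) * μ (cylinder y n)) := mul_le_mul_left ih _
      _ = (1 - ENNReal.ofReal (γ⁻¹ ^ 3) * μ (cylinder y n)) ^ (J + 1) :=
          (pow_succ _ J).symm

end Stmt10
namespace Stmt10

variable {φ : Sig → ℝ} {γ : ℝ} {μ : Measure Sig}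

lemma elog2_coe (l : ℕ) : elog2 (l : ℕ∞) = ENNReal.ofReal (Real.logb 2 l) := rfl

lemma elog2_top : elog2 ⊤ = ⊤ := rfl

section PerY

variable (hG : IsGibbs φ γ μ) (y : Sig)

lemma pcyl_pos (hG : IsGibbs φ γ μ) (y : Sig) (n : ℕ) : 0 < (μ (cylinder y n)).toReal := by
  haveI : IsProbabilityMeasure μ := hG.2.1
  exact ENNReal.toReal_pos (cylinder_pos hG y n).ne' (measure_ne_top μ _)

lemma pcyl_le_one (hG : IsGibbs φ γ μ) (y : Sig) (n : ℕ) : (μ (cylinder y n)).toReal ≤ 1 := by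
  haveI : IsProbabilityMeasure μ := hG.2.1
  exact ENNReal.toReal_le_of_le_ofReal one_pos.le (by simpa using prob_le_one)

lemma mu_cyl_eq (hG : IsGibbs φ γ μ) (y : Sig) (n : ℕ) :
    μ (cylinder y n) = ENNReal.ofReal ((μ (cylinder y n)).toReal) := by
  haveI : IsProbabilityMeasure μ := hG.2.1
  exact (ENNReal.ofReal_toReal (measure_ne_top μ _)).symm

lemma b_nonneg (hG : IsGibbs φ γ μ) (y : Sig) (n : ℕ) :
    0 ≤ -Real.logb 2 ((μ (cylinder y n)).toReal) := by
  rw [neg_nonneg]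
  exact Real.logb_nonpos one_lt_two (pcyl_pos hG y n).le (pcyl_le_one hG y n)

lemma negLog2_mu_cyl (hG : IsGibbs φ γ μ) (y : Sig) (n : ℕ) :
    negLog2 (μ (cylinder y n)) = ENNReal.ofReal (-Real.logb 2 ((μ (cylinder y n)).toReal)) := by
  rw [negLog2, if_neg (cylinder_pos hG y n).ne']

lemma rpow_neg_b (hG : IsGibbs φ γ μ) (y : Sig) (n : ℕ) :
    (2:ℝ) ^ (-(-Real.logb 2 ((μ (cylinder y n)).toReal))) = (μ (cylinder y n)).toReal := by
  rw [neg_neg]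
  exact Real.rpow_logb two_pos (by norm_num) (pcyl_pos hG y n)

end PerY

/-- liminf of `u + c` is at most `liminf u + c`. -/
lemma liminf_add_const_le (u : ℕ → ℝ≥0∞) (c : ℝ≥0∞) :
    (atTop.liminf fun n => u n + c) ≤ atTop.liminf u + c := by
  rw [Filter.liminf_eq, Filter.liminf_eq]
  refine sSup_le fun a ha => ?_
  rw [← tsub_le_iff_right]
  refine le_sSup ?_
  simp only [Set.mem_setOf_eq] at ha ⊢
  exact ha.mono fun n h => tsub_le_iff_right.mpr h

end Stmt10
namespace Stmt10

lemma g_div_tendsto (γ : ℝ) (hγ : 0 < γ) :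
    Filter.Tendsto (fun n : ℕ => Real.logb 2 (2 * γ ^ 3 * (n:ℝ) ^ 2) / n) atTop (nhds 0) := by
  have hlog : Filter.Tendsto (fun n : ℕ => Real.log n / n) atTop (nhds 0) :=
    Real.isLittleO_log_id_atTop.tendsto_div_nhds_zero.comp tendsto_natCast_atTop_atTop
  have h1 : Filter.Tendsto (fun n : ℕ => Real.logb 2 (2 * γ ^ 3) / n) atTop (nhds 0) :=
    tendsto_const_div_atTop_nhds_zero_nat _
  have h2 : Filter.Tendsto (fun n : ℕ => 2 * (Real.log n / n * (Real.log 2)⁻¹)) atTop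
      (nhds 0) := by
    have := (hlog.mul_const (Real.log 2)⁻¹).const_mul 2
    simpa using this
  have hsum := h1.add h2
  rw [add_zero] at hsum
  refine hsum.congr' ?_
  filter_upwards [eventually_ge_atTop 1] with n hn
  have hn0 : (0:ℝ) < n := by exact_mod_cast hn
  have hne1 : (2 * γ ^ 3 : ℝ) ≠ 0 := by positivity
  have hne2 : ((n:ℝ) ^ 2 : ℝ) ≠ 0 := by positivity
  rw [Real.logb_mul hne1 hne2, Real.logb_pow]
  have : Real.logb 2 (n:ℝ) = Real.log n / n * (Real.log 2)⁻¹ * n := by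
    rw [Real.logb]
    field_simp
  rw [add_div]
  congr 1
  rw [this]
  field_simp
  ring

end Stmt10
namespace Stmt10

variable {φ : Sig → ℝ} {γ : ℝ} {μ : Measure Sig}

lemma lower_ae (hG : IsGibbs φ γ μ) (y : Sig) {ε : ℝ} (hε : 0 < ε) :
    ∀ᵐ x ∂μ, ∀ᶠ n in atTop,
      ENNReal.ofReal (-Real.logb 2 ((μ (cylinder y n)).toReal)) ≤
        elog2 (hitTime x (cylinder y n)) + ENNReal.ofReal (n * ε) := by
  set b : ℕ → ℝ := fun n => -Real.logb 2 ((μ (cylinder y n)).toReal) with hb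
  set K : ℕ → ℕ := fun n => ⌊(2:ℝ) ^ (b n - n * ε)⌋₊ with hK
  set s : ℕ → Set Sig := fun n => {x | hitTime x (cylinder y n) ≤ (K n : ℕ∞)} with hs
  have hbound : ∀ n, μ (s n) ≤ ENNReal.ofReal ((2:ℝ) ^ (-ε)) ^ n := by
    intro n
    have h1 : μ (s n) ≤ (K n : ℝ≥0∞) * μ (cylinder y n) :=
      measure_hitTime_le hG _ (measurableSet_cylinder y n) (K n)
    have h2 : (K n : ℝ≥0∞) ≤ ENNReal.ofReal ((2:ℝ) ^ (b n - n * ε)) := by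
      rw [← ENNReal.ofReal_natCast]
      exact ENNReal.ofReal_le_ofReal (Nat.floor_le (Real.rpow_nonneg two_pos.le _))
    calc μ (s n) ≤ (K n : ℝ≥0∞) * μ (cylinder y n) := h1
      _ ≤ ENNReal.ofReal ((2:ℝ) ^ (b n - n * ε)) *
          ENNReal.ofReal ((μ (cylinder y n)).toReal) :=
        mul_le_mul' h2 (mu_cyl_eq hG y n).le
      _ = ENNReal.ofReal ((2:ℝ) ^ (b n - n * ε) * (μ (cylinder y n)).toReal) := by
        rw [← ENNReal.ofReal_mul (Real.rpow_nonneg two_pos.le _)]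
      _ = ENNReal.ofReal ((2:ℝ) ^ (-ε)) ^ n := by
        have hpe : (μ (cylinder y n)).toReal = (2:ℝ) ^ (-(b n)) := by
          show (μ (cylinder y n)).toReal =
            (2:ℝ) ^ (-(-Real.logb 2 ((μ (cylinder y n)).toReal)))
          exact (rpow_neg_b hG y n).symm
        rw [hpe, ← Real.rpow_add two_pos, show b n - ↑n * ε + -b n = -ε * ↑n by ring,
          Real.rpow_mul two_pos.le, Real.rpow_natCast, ENNReal.ofReal_pow
          (Real.rpow_nonneg two_pos.le _)]
  have hsum : (∑' n, μ (s n)) ≠ ⊤ := by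
    refine ne_top_of_le_ne_top ?_ (ENNReal.tsum_le_tsum hbound)
    rw [ENNReal.tsum_geometric]
    rw [Ne, ENNReal.inv_eq_top, tsub_eq_zero_iff_le, not_le]
    rw [ENNReal.ofReal_lt_one]
    exact Real.rpow_lt_one_of_one_lt_of_neg one_lt_two (neg_lt_zero.mpr hε)
  filter_upwards [ae_eventually_notMem hsum] with x hx
  filter_upwards [hx] with n hn
  rcases eq_or_ne (hitTime x (cylinder y n)) ⊤ with hτ | hτ
  · rw [hτ, elog2_top]
    simp
  · obtain ⟨l, hl⟩ := ENat.ne_top_iff_exists.mp hτ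
    have hl1 : 1 ≤ l := by
      have := one_le_hitTime x (cylinder y n)
      rw [← hl] at this
      exact_mod_cast this
    have hKl : K n < l := by
      have : ¬ hitTime x (cylinder y n) ≤ (K n : ℕ∞) := hn
      rw [← hl] at this
      exact_mod_cast not_le.mp this
    have hreal : (2:ℝ) ^ (b n - n * ε) < l := by
      calc (2:ℝ) ^ (b n - n * ε) < K n + 1 := Nat.lt_floor_add_one _
        _ ≤ l := by exact_mod_cast hKl
    have hlog : b n - n * ε ≤ Real.logb 2 l := by
      calc b n - n * ε = Real.logb 2 ((2:ℝ) ^ (b n - n * ε)) :=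
            (Real.logb_rpow two_pos (by norm_num)).symm
        _ ≤ Real.logb 2 l := Real.logb_le_logb_of_le one_lt_two
            (Real.rpow_pos_of_pos two_pos _) hreal.le
    have hfin : b n ≤ Real.logb 2 l + n * ε := by linarith
    rw [← hl, elog2_coe]
    calc ENNReal.ofReal (b n) ≤ ENNReal.ofReal (Real.logb 2 l + n * ε) :=
          ENNReal.ofReal_le_ofReal hfin
      _ = ENNReal.ofReal (Real.logb 2 l) + ENNReal.ofReal (n * ε) :=
          ENNReal.ofReal_add (Real.logb_nonneg one_lt_two (by exact_mod_cast hl1))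
            (by positivity)

lemma upper_ae (hG : IsGibbs φ γ μ) (y : Sig) :
    ∀ᵐ x ∂μ, ∀ᶠ n in atTop,
      hitTime x (cylinder y n) ≤
        ((⌈(n:ℝ) * γ ^ 3 / (μ (cylinder y n)).toReal⌉₊ * n : ℕ) : ℕ∞) := by
  have hγ : (0:ℝ) < γ := gibbs_gamma_pos hG
  have hγ1 : (1:ℝ) ≤ γ := hG.1.le
  set J : ℕ → ℕ := fun n => ⌈(n:ℝ) * γ ^ 3 / (μ (cylinder y n)).toReal⌉₊ with hJ
  set s : ℕ → Set Sig := fun k =>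
    {x : Sig | ∀ j, 1 ≤ j → j ≤ J (k+1) → shift^[j * (k+1)] x ∉ cylinder y (k+1)} with hs
  have hcore : ∀ n, 1 ≤ n →
      (1 - ENNReal.ofReal (γ⁻¹ ^ 3) * μ (cylinder y n)) ^ (J n) ≤
        ENNReal.ofReal (Real.exp (-1)) ^ n := by
    intro n hn
    set p := (μ (cylinder y n)).toReal with hp
    have hp0 : 0 < p := pcyl_pos hG y n
    have hp1 : p ≤ 1 := pcyl_le_one hG y n
    set a := γ⁻¹ ^ 3 * p with ha
    have ha0 : 0 ≤ a := by positivity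
    have ha1 : a ≤ 1 := by
      have h1 : γ⁻¹ ^ 3 ≤ 1 := pow_le_one₀ (by positivity) (inv_le_one_of_one_le₀ hγ1)
      calc a ≤ 1 * 1 := mul_le_mul h1 hp1 hp0.le one_pos.le
        _ = 1 := mul_one 1
    have hofr : 1 - ENNReal.ofReal (γ⁻¹ ^ 3) * μ (cylinder y n) = ENNReal.ofReal (1 - a) := by
      rw [mu_cyl_eq hG y n, ← ENNReal.ofReal_mul (by positivity), ← ENNReal.ofReal_one,
        ← ENNReal.ofReal_sub _ (by positivity)]
    rw [hofr, ← ENNReal.ofReal_pow (by linarith), ← ENNReal.ofReal_pow (Real.exp_nonneg _)]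
    refine ENNReal.ofReal_le_ofReal ?_
    have hcJ : (n:ℝ) ≤ a * J n := by
      have h1 : (n:ℝ) * γ ^ 3 / p ≤ J n := Nat.le_ceil _
      have h2 : a * ((n:ℝ) * γ ^ 3 / p) = n := by
        field_simp [ha]
        rw [ha]; field_simp
      calc (n:ℝ) = a * ((n:ℝ) * γ ^ 3 / p) := h2.symm
        _ ≤ a * J n := mul_le_mul_of_nonneg_left h1 ha0
    calc (1 - a) ^ J n ≤ Real.exp (-a) ^ J n := by
          refine pow_le_pow_left₀ (by linarith) ?_ _
          linarith [Real.add_one_le_exp (-a)]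
      _ = Real.exp ((J n : ℝ) * (-a)) := (Real.exp_nat_mul _ _).symm
      _ ≤ Real.exp ((n:ℝ) * (-1)) := by
          refine Real.exp_le_exp.mpr ?_
          have : (J n : ℝ) * a ≥ n := by
            calc (n:ℝ) ≤ a * J n := hcJ
              _ = (J n : ℝ) * a := mul_comm _ _
          nlinarith
      _ = Real.exp (-1) ^ n := Real.exp_nat_mul _ _
  have hbound : ∀ k, μ (s k) ≤ ENNReal.ofReal (Real.exp (-1)) ^ k := by
    intro k
    have h1 : μ (s k) ≤ (1 - ENNReal.ofReal (γ⁻¹ ^ 3) * μ (cylinder y (k+1))) ^ (J (k+1)) :=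
      miss_bound hG y (Nat.le_add_left 1 k) (J (k+1))
    have h2 := hcore (k+1) (Nat.le_add_left 1 k)
    have h3 : ENNReal.ofReal (Real.exp (-1)) ^ (k+1) ≤ ENNReal.ofReal (Real.exp (-1)) ^ k := by
      rw [pow_succ]
      calc ENNReal.ofReal (Real.exp (-1)) ^ k * ENNReal.ofReal (Real.exp (-1))
          ≤ ENNReal.ofReal (Real.exp (-1)) ^ k * 1 := by
            refine mul_le_mul_right ?_ _
            rw [ENNReal.ofReal_le_one]
            have h4 : Real.exp (-1) < 1 := by
              calc Real.exp (-1) < Real.exp 0 := Real.exp_lt_exp.mpr neg_one_lt_zero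
                _ = 1 := Real.exp_zero
            exact h4.le
        _ = ENNReal.ofReal (Real.exp (-1)) ^ k := mul_one _
    exact (h1.trans h2).trans h3
  have hsum : (∑' k, μ (s k)) ≠ ⊤ := by
    refine ne_top_of_le_ne_top ?_ (ENNReal.tsum_le_tsum hbound)
    rw [ENNReal.tsum_geometric]
    rw [Ne, ENNReal.inv_eq_top, tsub_eq_zero_iff_le, not_le, ENNReal.ofReal_lt_one]
    calc Real.exp (-1) < Real.exp 0 := Real.exp_lt_exp.mpr neg_one_lt_zero
      _ = 1 := Real.exp_zero
  filter_upwards [ae_eventually_notMem hsum] with x hx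
  obtain ⟨N, hN⟩ := eventually_atTop.mp hx
  refine eventually_atTop.mpr ⟨N + 1, fun n hn => ?_⟩
  have hn1 : 1 ≤ n := by omega
  have hxk := hN (n - 1) (by omega)
  have hkn : n - 1 + 1 = n := by omega
  simp only [hs, Set.mem_setOf_eq, hkn] at hxk
  push_neg at hxk
  obtain ⟨j, hj1, hjJ, hjmem⟩ := hxk
  refine hitTime_le_iff.mpr ⟨j * n, Nat.one_le_iff_ne_zero.mpr (by positivity), ?_, hjmem⟩
  exact Nat.mul_le_mul_right n hjJ

end Stmt10
namespace Stmt10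

variable {φ : Sig → ℝ} {γ : ℝ} {μ : Measure Sig}

lemma per_y (hG : IsGibbs φ γ μ) (y : Sig) :
    ∀ᵐ x ∂μ, alpha x y = lowerLocalEntropy μ y := by
  have hγ : (0:ℝ) < γ := gibbs_gamma_pos hG
  have hγ1 : (1:ℝ) ≤ γ := hG.1.le
  have hh : lowerLocalEntropy μ y =
      atTop.liminf (fun n => ENNReal.ofReal (-Real.logb 2 ((μ (cylinder y n)).toReal)) /
        (n : ℝ≥0∞)) := by
    unfold lowerLocalEntropy
    congr 1
    funext n
    rw [negLog2_mu_cyl hG y n]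
  have hgt := g_div_tendsto γ hγ
  have hlow : ∀ᵐ x ∂μ, ∀ k : ℕ, ∀ᶠ n in atTop,
      ENNReal.ofReal (-Real.logb 2 ((μ (cylinder y n)).toReal)) ≤
        elog2 (hitTime x (cylinder y n)) + ENNReal.ofReal (n * (1/(k+1))) := by
    rw [ae_all_iff]
    intro k
    exact lower_ae hG y (by positivity)
  filter_upwards [upper_ae hG y, hlow] with x hup hlo
  set t : ℕ → ℝ≥0∞ := fun n => elog2 (hitTime x (cylinder y n)) / (n : ℝ≥0∞) with ht
  set a : ℕ → ℝ≥0∞ :=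
    fun n => ENNReal.ofReal (-Real.logb 2 ((μ (cylinder y n)).toReal)) / (n : ℝ≥0∞) with ha
  have halpha : alpha x y = atTop.liminf t := rfl
  rw [halpha, hh]
  refine le_antisymm ?_ ?_
  · refine ENNReal.le_of_forall_pos_le_add fun e he _ => ?_
    have hev1 : ∀ᶠ n : ℕ in atTop, Real.logb 2 (2 * γ ^ 3 * (n:ℝ) ^ 2) / n < (e:ℝ) :=
      hgt.eventually_lt_const (by exact_mod_cast he)
    have hev : ∀ᶠ n in atTop, t n ≤ a n + (e : ℝ≥0∞) := by
      filter_upwards [hup, hev1, eventually_ge_atTop 1] with n hn1 hn2 hn3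
      simp only [ht, ha]
      set p := (μ (cylinder y n)).toReal with hp
      have hp0 : 0 < p := pcyl_pos hG y n
      have hp1 : p ≤ 1 := pcyl_le_one hG y n
      have hn0 : (0:ℝ) < n := by exact_mod_cast hn3
      set J : ℕ := ⌈(n:ℝ) * γ ^ 3 / p⌉₊ with hJ
      have hne : hitTime x (cylinder y n) ≠ ⊤ :=
        ne_top_of_le_ne_top (ENat.coe_ne_top _) hn1
      obtain ⟨l, hl⟩ := ENat.ne_top_iff_exists.mp hne
      have hlle : l ≤ J * n := by
        rw [← hl] at hn1
        exact_mod_cast hn1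
      have hl1 : 1 ≤ l := by
        have := one_le_hitTime x (cylinder y n)
        rw [← hl] at this
        exact_mod_cast this
      have hn1' : (1:ℝ) ≤ (n:ℝ) := by exact_mod_cast hn3
      have hJge : (1:ℝ) ≤ (n:ℝ) * γ ^ 3 / p := by
        have h2 : (1:ℝ) ≤ γ ^ 3 := one_le_pow₀ hγ1
        rw [le_div_iff₀ hp0]
        nlinarith [hn1', h2, hp1]
      have hJle : (J:ℝ) ≤ 2 * ((n:ℝ) * γ ^ 3 / p) := by
        have h1 : (J:ℝ) < (n:ℝ) * γ ^ 3 / p + 1 := Nat.ceil_lt_add_one (by positivity)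
        nlinarith
      have hJn : ((J * n : ℕ):ℝ) ≤ 2 * γ ^ 3 * (n:ℝ) ^ 2 / p := by
        push_cast
        calc (J:ℝ) * n ≤ 2 * ((n:ℝ) * γ ^ 3 / p) * n := by nlinarith
          _ = 2 * γ ^ 3 * (n:ℝ) ^ 2 / p := by
            field_simp
      have harg1 : (1:ℝ) ≤ 2 * γ ^ 3 * (n:ℝ) ^ 2 := by
        nlinarith [one_le_pow₀ hγ1 (n := 3), hn1']
      have hg0 : 0 ≤ Real.logb 2 (2 * γ ^ 3 * (n:ℝ) ^ 2) :=
        Real.logb_nonneg one_lt_two harg1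
      have hlog : Real.logb 2 l ≤ Real.logb 2 (2 * γ ^ 3 * (n:ℝ) ^ 2) + (-Real.logb 2 p) := by
        have hl0 : (0:ℝ) < l := by exact_mod_cast hl1
        have h1 : Real.logb 2 (l:ℝ) ≤ Real.logb 2 ((J * n : ℕ):ℝ) :=
          Real.logb_le_logb_of_le one_lt_two hl0 (by exact_mod_cast hlle)
        have h2 : Real.logb 2 ((J * n : ℕ):ℝ) ≤ Real.logb 2 (2 * γ ^ 3 * (n:ℝ) ^ 2 / p) := by
          refine Real.logb_le_logb_of_le one_lt_two ?_ hJn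
          have : (1:ℝ) ≤ ((J * n : ℕ):ℝ) := by
            have hJ1 : 1 ≤ J := Nat.one_le_ceil_iff.mpr (by positivity)
            have : 1 ≤ J * n := Nat.one_le_iff_ne_zero.mpr (by positivity)
            exact_mod_cast this
          linarith
        have h3 : Real.logb 2 (2 * γ ^ 3 * (n:ℝ) ^ 2 / p) =
            Real.logb 2 (2 * γ ^ 3 * (n:ℝ) ^ 2) - Real.logb 2 p :=
          Real.logb_div (by positivity) hp0.ne'
        linarith
      rw [← hl, elog2_coe]
      calc ENNReal.ofReal (Real.logb 2 l) / (n : ℝ≥0∞)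
          ≤ ENNReal.ofReal (Real.logb 2 (2 * γ ^ 3 * (n:ℝ) ^ 2) + (-Real.logb 2 p)) /
            (n : ℝ≥0∞) :=
            ENNReal.div_le_div_right (ENNReal.ofReal_le_ofReal hlog) _
        _ = (ENNReal.ofReal (Real.logb 2 (2 * γ ^ 3 * (n:ℝ) ^ 2)) +
            ENNReal.ofReal (-Real.logb 2 p)) / (n : ℝ≥0∞) := by
            rw [ENNReal.ofReal_add hg0 (b_nonneg hG y n)]
        _ = ENNReal.ofReal (Real.logb 2 (2 * γ ^ 3 * (n:ℝ) ^ 2)) / (n : ℝ≥0∞) +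
            ENNReal.ofReal (-Real.logb 2 p) / (n : ℝ≥0∞) := ENNReal.add_div
        _ ≤ (e : ℝ≥0∞) + ENNReal.ofReal (-Real.logb 2 p) / (n : ℝ≥0∞) := by
            refine add_le_add_left ?_ _
            rw [← ENNReal.ofReal_natCast n, ← ENNReal.ofReal_div_of_pos hn0,
              ← ENNReal.ofReal_coe_nnreal]
            exact ENNReal.ofReal_le_ofReal hn2.le
        _ = ENNReal.ofReal (-Real.logb 2 p) / (n : ℝ≥0∞) + (e : ℝ≥0∞) := add_comm _ _
    calc atTop.liminf t ≤ atTop.liminf (fun n => a n + (e : ℝ≥0∞)) :=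
          Filter.liminf_le_liminf hev
      _ ≤ atTop.liminf a + (e : ℝ≥0∞) := liminf_add_const_le a _
  · refine ENNReal.le_of_forall_pos_le_add fun e he _ => ?_
    have he' : (0:ℝ) < e := by exact_mod_cast he
    obtain ⟨k, hk⟩ := exists_nat_one_div_lt he'
    have hev : ∀ᶠ n in atTop, a n ≤ t n + ENNReal.ofReal (1/(k+1)) := by
      filter_upwards [hlo k, eventually_ge_atTop 1] with n hn1 hn3
      simp only [ht, ha]
      have hn0 : (0:ℝ) < n := by exact_mod_cast hn3
      have hdiv : ENNReal.ofReal ((n:ℝ) * (1/(k+1))) / (n : ℝ≥0∞) =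
          ENNReal.ofReal (1/(k+1)) := by
        rw [← ENNReal.ofReal_natCast n, ← ENNReal.ofReal_div_of_pos hn0,
          mul_div_cancel_left₀ _ hn0.ne']
      calc ENNReal.ofReal (-Real.logb 2 ((μ (cylinder y n)).toReal)) / (n : ℝ≥0∞)
          ≤ (elog2 (hitTime x (cylinder y n)) + ENNReal.ofReal ((n:ℝ) * (1/(k+1)))) /
            (n : ℝ≥0∞) := ENNReal.div_le_div_right hn1 _
        _ = elog2 (hitTime x (cylinder y n)) / (n : ℝ≥0∞) +
            ENNReal.ofReal ((n:ℝ) * (1/(k+1))) / (n : ℝ≥0∞) := ENNReal.add_div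
        _ = elog2 (hitTime x (cylinder y n)) / (n : ℝ≥0∞) + ENNReal.ofReal (1/(k+1)) := by
            rw [hdiv]
    calc atTop.liminf a ≤ atTop.liminf (fun n => t n + ENNReal.ofReal (1/(k+1))) :=
          Filter.liminf_le_liminf hev
      _ ≤ atTop.liminf t + ENNReal.ofReal (1/(k+1)) := liminf_add_const_le t _
      _ ≤ atTop.liminf t + (e : ℝ≥0∞) := by
          refine add_le_add_right ?_ _
          rw [← ENNReal.ofReal_coe_nnreal]
          exact ENNReal.ofReal_le_ofReal hk.le

end Stmt10
namespace Stmt10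

variable {φ : Sig → ℝ} {γ : ℝ} {μ : Measure Sig}

lemma measurable_hitTime_comp {C : Set Sig} (hC : MeasurableSet C) (F : ℕ∞ → ℝ≥0∞) :
    Measurable fun x => F (hitTime x C) := by
  intro A _
  have : (fun x => F (hitTime x C)) ⁻¹' A =
      ⋃ t ∈ {t : ℕ∞ | F t ∈ A}, {x : Sig | hitTime x C = t} := by
    ext x
    simp only [Set.mem_preimage, Set.mem_iUnion, Set.mem_setOf_eq, exists_prop]
    exact ⟨fun h => ⟨hitTime x C, h, rfl⟩, fun ⟨t, ht, he⟩ => he ▸ ht⟩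
  rw [this]
  exact MeasurableSet.biUnion (Set.to_countable _)
    fun t _ => measurableSet_hitTime_eq C hC t

lemma measurable_wordSet (n : ℕ) (w : Fin n → Bool) :
    MeasurableSet {q : Sig × Sig | ∀ i : Fin n, q.2 i.1 = w i} := by
  have : {q : Sig × Sig | ∀ i : Fin n, q.2 i.1 = w i} =
      ⋂ i : Fin n, (fun q : Sig × Sig => q.2 i.1) ⁻¹' {w i} := by
    ext q
    simp [Set.mem_iInter]
  rw [this]
  exact MeasurableSet.iInter fun i =>
    ((measurable_pi_apply i.1).comp measurable_snd) (measurableSet_singleton (w i))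

lemma measurable_elog2_hit (n : ℕ) :
    Measurable fun p : Sig × Sig => elog2 (hitTime p.1 (cylinder p.2 n)) := by
  classical
  have key : (fun p : Sig × Sig => elog2 (hitTime p.1 (cylinder p.2 n))) =
      fun p => ∑ w : Fin n → Bool,
        Set.indicator {q : Sig × Sig | ∀ i : Fin n, q.2 i.1 = w i}
          (fun q => elog2 (hitTime q.1
            (cylinder (fun j => if h : j < n then w ⟨j, h⟩ else false) n))) p := by
    funext p
    set w0 : Fin n → Bool := fun i => p.2 i.1 with hw0
    rw [Fintype.sum_eq_single w0]
    · rw [Set.indicator_of_mem (by simp [hw0])]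
      congr 1
      apply congrArg
      refine cylinder_congr fun i hi => ?_
      simp [dif_pos hi, hw0]
    · intro w hw
      rw [Set.indicator_of_notMem]
      intro hmem
      refine hw ?_
      funext i
      exact (hmem i).symm
  rw [key]
  refine Finset.measurable_sum _ fun w _ => ?_
  exact Measurable.indicator
    ((measurable_hitTime_comp (measurableSet_cylinder _ n) elog2).comp measurable_fst)
    (measurable_wordSet n w)

lemma measurable_negLog2_cyl (n : ℕ) :
    Measurable fun y : Sig => negLog2 (μ (cylinder y n)) := by
  classical
  have key : (fun y : Sig => negLog2 (μ (cylinder y n))) =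
      fun y => ∑ w : Fin n → Bool,
        Set.indicator {z : Sig | ∀ i : Fin n, z i.1 = w i}
          (fun _ => negLog2 (μ (cylinder (fun j => if h : j < n then w ⟨j, h⟩ else false) n)))
          y := by
    funext y
    set w0 : Fin n → Bool := fun i => y i.1 with hw0
    rw [Fintype.sum_eq_single w0]
    · rw [Set.indicator_of_mem (by simp [hw0])]
      congr 2
      refine cylinder_congr fun i hi => ?_
      simp [dif_pos hi, hw0]
    · intro w hw
      rw [Set.indicator_of_notMem]
      intro hmem
      refine hw ?_
      funext i
      exact (hmem i).symm
  rw [key]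
  refine Finset.measurable_sum _ fun w _ => ?_
  refine Measurable.indicator measurable_const ?_
  have : {z : Sig | ∀ i : Fin n, z i.1 = w i} =
      ⋂ i : Fin n, (fun z : Sig => z i.1) ⁻¹' {w i} := by
    ext z
    simp [Set.mem_iInter]
  rw [this]
  exact MeasurableSet.iInter fun i =>
    (measurable_pi_apply i.1) (measurableSet_singleton (w i))

lemma measurable_alpha : Measurable fun p : Sig × Sig => alpha p.1 p.2 := by
  have : (fun p : Sig × Sig => alpha p.1 p.2) = fun p =>
      Filter.atTop.liminf fun n : ℕ =>
        elog2 (hitTime p.1 (cylinder p.2 n)) / (n : ℝ≥0∞) := rfl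
  rw [this]
  exact Measurable.liminf fun n =>
    (measurable_elog2_hit n).div measurable_const

lemma measurable_lle : Measurable fun y : Sig => lowerLocalEntropy μ y := by
  have : (fun y : Sig => lowerLocalEntropy μ y) = fun y =>
      Filter.atTop.liminf fun n : ℕ => negLog2 (μ (cylinder y n)) / (n : ℝ≥0∞) := rfl
  rw [this]
  exact Measurable.liminf fun n => (measurable_negLog2_cyl n).div measurable_const

lemma measurableSet_good :
    MeasurableSet {p : Sig × Sig | alpha p.1 p.2 = lowerLocalEntropy μ p.2} := by
  have h1 : Measurable fun p : Sig × Sig => alpha p.1 p.2 := measurable_alpha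
  have h2 : Measurable fun p : Sig × Sig => lowerLocalEntropy μ p.2 :=
    measurable_lle.comp measurable_snd
  have : {p : Sig × Sig | alpha p.1 p.2 = lowerLocalEntropy μ p.2} =
      {p : Sig × Sig | alpha p.1 p.2 ≤ lowerLocalEntropy μ p.2} ∩
      {p : Sig × Sig | lowerLocalEntropy μ p.2 ≤ alpha p.1 p.2} := by
    ext p
    simp only [Set.mem_setOf_eq, Set.mem_inter_iff]
    exact ⟨fun h => ⟨h.le, h.ge⟩, fun h => le_antisymm h.1 h.2⟩
  rw [this]
  exact (measurableSet_le h1 h2).inter (measurableSet_le h2 h1)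

end Stmt10
/-- For `μ_φ × ν`-a.e. `(x,y)`, `α(x,y)` equals the lower local entropy
of `μ_φ` at `y`. -/
theorem statement10 (φ : Sig → ℝ) (γ : ℝ) (μ : Measure Sig)
    (hφ : IsHolder φ) (hG : IsGibbs φ γ μ)
    (ν : Measure Sig) (hν : IsProbabilityMeasure ν) :
    ∀ᵐ p ∂(μ.prod ν), alpha p.1 p.2 = lowerLocalEntropy μ p.2 := by
  haveI : IsProbabilityMeasure μ := hG.2.1
  haveI : IsProbabilityMeasure ν := hν
  have hmeas : MeasurableSet {p : Sig × Sig | alpha p.1 p.2 = lowerLocalEntropy μ p.2} :=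
    Stmt10.measurableSet_good (μ := μ)
  rw [MeasureTheory.Measure.ae_prod_iff_ae_ae hmeas,
    MeasureTheory.Measure.ae_ae_comm hmeas]
  exact ae_of_all _ fun y => Stmt10.per_y hG y
end

section
/- Let φ : Σ → ℝ be Hölder continuous and let μ_φ be a Gibbs measure for φ. For all real numbers h > 0, g > 0 and λ > 0 there exists N such that for every n ≥ N and every nonempty finite family 𝒞 of cylinders of length n satisfying μ_φ(C) ≥ 2^{-(h−g)n} for every C ∈ 𝒞, one has μ_φ({x ∈ Σ : there exists C ∈ 𝒞 with τ(x,C) > 2^{hn}}) ≤ 2^{-λn}. -/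
open Filter MeasureTheory Set
open scoped ENNReal

section Aux

lemma shift_iterate_apply (x : Sig) (k i : ℕ) : shift^[k] x i = x (i + k) := by
  induction k generalizing x i with
  | zero => rfl
  | succ k ih =>
    rw [Function.iterate_succ_apply]
    rw [ih]
    simp [shift, Nat.add_assoc]

lemma measurable_shift : Measurable shift := by
  have : Measurable (fun x : Sig => (fun i => x (i + 1) : ℕ → Bool)) := by
    rw [measurable_pi_iff (X := fun _ : ℕ => Bool)]
    intro i
    exact measurable_pi_apply (X := fun _ : ℕ => Bool) (i + 1)
  exact this

lemma measurableSet_cylinder (x : Sig) (n : ℕ) : MeasurableSet (_root_.cylinder x n) := by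
  have : _root_.cylinder x n = ⋂ i ∈ {i : ℕ | i < n}, {y : Sig | y i = x i} := by
    ext y; simp [_root_.cylinder]
  rw [this]
  apply MeasurableSet.biInter (Set.to_countable _)
  intro i _
  exact measurable_pi_apply (X := fun _ : ℕ => Bool) i (measurableSet_singleton (x i))

lemma cylinder_eq_of_agree {a b : Sig} {n : ℕ} (h : ∀ i < n, a i = b i) :
    _root_.cylinder a n = _root_.cylinder b n := by
  ext y
  constructor <;> intro hy i hi
  · rw [hy i hi, h i hi]
  · rw [hy i hi, ← h i hi]

lemma cylinder_disjoint {a b : Sig} {n : ℕ} (h : ∃ i < n, a i ≠ b i) :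
    Disjoint (_root_.cylinder a n) (_root_.cylinder b n) := by
  obtain ⟨i, hi, hne⟩ := h
  rw [Set.disjoint_left]
  intro y hya hyb
  exact hne ((hya i hi).symm.trans (hyb i hi))

lemma birkhoff_add (φ : Sig → ℝ) (L m : ℕ) (z : Sig) :
    birkhoff φ (L + m) z = birkhoff φ L z + birkhoff φ m (shift^[L] z) := by
  unfold birkhoff
  rw [Finset.sum_range_add]
  congr 1
  apply Finset.sum_congr rfl
  intro j _
  rw [← Function.iterate_add_apply, Nat.add_comm]

end Aux

section Aux2
variable {φ : Sig → ℝ} {γ : ℝ} {μ : MeasureTheory.Measure Sig}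

lemma gibbs_mix (hG : IsGibbs φ γ μ) (z : Sig) (L m : ℕ) (hL : 1 ≤ L) (hm : 1 ≤ m) :
    ENNReal.ofReal (γ⁻¹ ^ 3) *
      (μ (_root_.cylinder z L) * μ (_root_.cylinder (shift^[L] z) m))
      ≤ μ (_root_.cylinder z (L + m)) := by
  obtain ⟨hγ, hprob, hinv, hbd⟩ := hG
  have hγ0 : (0:ℝ) < γ := lt_trans one_pos hγ
  have h1 := (hbd z L hL).2
  have h2 := (hbd (shift^[L] z) m hm).2
  have h3 := (hbd z (L + m) (by omega)).1
  calc ENNReal.ofReal (γ⁻¹ ^ 3) *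
        (μ (_root_.cylinder z L) * μ (_root_.cylinder (shift^[L] z) m))
      ≤ ENNReal.ofReal (γ⁻¹ ^ 3) *
        (ENNReal.ofReal (γ * 2 ^ birkhoff φ L z) *
          ENNReal.ofReal (γ * 2 ^ birkhoff φ m (shift^[L] z))) := by
        gcongr
    _ = ENNReal.ofReal (γ⁻¹ * 2 ^ birkhoff φ (L + m) z) := by
        rw [← ENNReal.ofReal_mul (by positivity), ← ENNReal.ofReal_mul (by positivity)]
        congr 1
        rw [birkhoff_add, Real.rpow_add (by norm_num : (0:ℝ) < 2)]
        field_simp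
    _ ≤ μ (_root_.cylinder z (L + m)) := h3

lemma measure_iterate_preimage (hinv : MeasureTheory.Measure.map shift μ = μ)
    {A : Set Sig} (hA : MeasurableSet A) (k : ℕ) : μ (shift^[k] ⁻¹' A) = μ A := by
  induction k with
  | zero => rfl
  | succ k ih =>
    rw [Function.iterate_succ, Set.preimage_comp]
    have hAk : MeasurableSet (shift^[k] ⁻¹' A) := (measurable_shift.iterate k) hA
    calc μ (shift ⁻¹' (shift^[k] ⁻¹' A))
        = (MeasureTheory.Measure.map shift μ) (shift^[k] ⁻¹' A) :=
          (MeasureTheory.Measure.map_apply measurable_shift hAk).symm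
      _ = μ (shift^[k] ⁻¹' A) := by rw [hinv]
      _ = μ A := ih

end Aux2
section Aux3
open scoped Classical
variable {φ : Sig → ℝ} {γ : ℝ} {μ : MeasureTheory.Measure Sig}

/-- Extend a finite word to an element of `Sig` by zeros. -/
def extL (L : ℕ) (w : Fin L → Bool) : Sig := fun i => if h : i < L then w ⟨i, h⟩ else false

/-- The point whose first `n` coordinates are `v` and whose subsequent coordinates follow `c`. -/
def gv (n : ℕ) (c : Sig) (v : Fin n → Bool) : Sig :=
  fun i => if h : i < n then v ⟨i, h⟩ else c (i - n)

/-- The point with prefix `w` (length `L`), then `v` (length `n`), then the tail of `c`. -/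
def glue (L n : ℕ) (c : Sig) (w : Fin L → Bool) (v : Fin n → Bool) : Sig :=
  fun i => if h : i < L then w ⟨i, h⟩
    else if h2 : i - L < n then v ⟨i - L, h2⟩ else c (i - (L + n))

lemma shift_glue (L n : ℕ) (c : Sig) (w : Fin L → Bool) (v : Fin n → Bool) :
    shift^[L] (glue L n c w v) = gv n c v := by
  funext i
  rw [shift_iterate_apply]
  show (if h : i + L < L then w ⟨i + L, h⟩
    else if h2 : i + L - L < n then v ⟨i + L - L, h2⟩ else c (i + L - (L + n))) = gv n c v i
  rw [dif_neg (by omega : ¬ (i + L < L))]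
  have e1 : i + L - L = i := by omega
  have e2 : i + L - (L + n) = i - n := by omega
  simp only [e1, e2]
  rfl

lemma glue_eq_extL_below (L n : ℕ) (c : Sig) (w : Fin L → Bool) (v : Fin n → Bool) :
    ∀ i < L, glue L n c w v i = extL L w i := by
  intro i hi
  simp [glue, extL, hi]

/-- Partitioning a measurable set by the cylinders of length `L`. -/
lemma measure_eq_sum_cyl (μ : MeasureTheory.Measure Sig) {E : Set Sig}
    (hE : MeasurableSet E) (L : ℕ) :
    μ E = ∑ w : Fin L → Bool, μ (_root_.cylinder (extL L w) L ∩ E) := by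
  have hcover : E = ⋃ w ∈ (Finset.univ : Finset (Fin L → Bool)),
      (_root_.cylinder (extL L w) L ∩ E) := by
    ext x
    simp only [Set.mem_iUnion, Finset.mem_univ, Set.mem_inter_iff, exists_prop, true_and]
    constructor
    · intro hx
      refine ⟨fun j => x j, ?_, hx⟩
      intro i hi
      simp [extL, hi]
    · rintro ⟨w, -, hx⟩
      exact hx
  have hdisj : Set.PairwiseDisjoint
      (↑(Finset.univ : Finset (Fin L → Bool)))
      (fun w => _root_.cylinder (extL L w) L ∩ E) := by
    intro a _ b _ hab
    apply Set.disjoint_of_subset Set.inter_subset_left Set.inter_subset_left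
    apply cylinder_disjoint
    by_contra hcon
    push_neg at hcon
    apply hab
    funext j
    have := hcon j j.isLt
    simpa [extL, j.isLt] using this
  calc μ E = μ (⋃ w ∈ (Finset.univ : Finset (Fin L → Bool)),
      (_root_.cylinder (extL L w) L ∩ E)) := by rw [← hcover]
    _ = ∑ w : Fin L → Bool, μ (_root_.cylinder (extL L w) L ∩ E) :=
      MeasureTheory.measure_biUnion_finset hdisj
        (fun w _ => (measurableSet_cylinder _ _).inter hE)

/-- Decomposition of `μ C` into the cylinders `gv v`. -/
lemma measure_cyl_eq_sum_gv (hinv : MeasureTheory.Measure.map shift μ = μ)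
    (c : Sig) (n : ℕ) :
    μ (_root_.cylinder c n) = ∑ v : Fin n → Bool, μ (_root_.cylinder (gv n c v) (2 * n)) := by
  have h1 : μ (_root_.cylinder c n) = μ (shift^[n] ⁻¹' _root_.cylinder c n) :=
    (measure_iterate_preimage hinv (measurableSet_cylinder _ _) n).symm
  have hcover : shift^[n] ⁻¹' _root_.cylinder c n
      = ⋃ v ∈ (Finset.univ : Finset (Fin n → Bool)), _root_.cylinder (gv n c v) (2 * n) := by
    ext x
    simp only [Set.mem_iUnion, Finset.mem_univ, exists_prop, true_and, Set.mem_preimage]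
    constructor
    · intro hx
      refine ⟨fun j => x j, ?_⟩
      intro i hi
      unfold gv
      rcases lt_or_ge i n with h | h
      · simp [h]
      · rw [dif_neg (by omega)]
        have h5 := hx (i - n) (by omega)
        rw [shift_iterate_apply] at h5
        rw [← h5]
        congr 1
        omega
    · rintro ⟨v, hv⟩
      intro i hi
      rw [shift_iterate_apply]
      have h6 := hv (i + n) (by omega)
      rw [h6]
      unfold gv
      rw [dif_neg (by omega)]
      congr 1
      omega
  have hdisj : Set.PairwiseDisjoint
      (↑(Finset.univ : Finset (Fin n → Bool)))
      (fun v => _root_.cylinder (gv n c v) (2 * n)) := by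
    intro a _ b _ hab
    apply cylinder_disjoint
    by_contra hcon
    push_neg at hcon
    apply hab
    funext j
    have := hcon j (by omega)
    simpa [gv, j.isLt] using this
  rw [h1, hcover]
  exact MeasureTheory.measure_biUnion_finset hdisj
    (fun v _ => measurableSet_cylinder _ _)

/-- The key mixing step. -/
lemma step_mix (hG : IsGibbs φ γ μ) (c : Sig) (n L : ℕ) (hn : 1 ≤ n) (hL : 1 ≤ L)
    {E : Set Sig} (hE : MeasurableSet E)
    (hdet : ∀ x y : Sig, (∀ i < L, x i = y i) → (x ∈ E ↔ y ∈ E)) :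
    ENNReal.ofReal (γ⁻¹ ^ 3) * μ E * μ (_root_.cylinder c n)
      ≤ μ (E ∩ shift^[L + n] ⁻¹' _root_.cylinder c n) := by
  have hinv : MeasureTheory.Measure.map shift μ = μ := hG.2.2.1
  set D := ENNReal.ofReal (γ⁻¹ ^ 3) with hD
  set f : (Fin L → Bool) → ℝ≥0∞ := fun w => μ (_root_.cylinder (extL L w) L ∩ E) with hf
  set g : (Fin n → Bool) → ℝ≥0∞ := fun v => μ (_root_.cylinder (gv n c v) (2 * n)) with hg
  set G : (Fin L → Bool) × (Fin n → Bool) → Set Sig := fun p =>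
    if extL L p.1 ∈ E then _root_.cylinder (glue L n c p.1 p.2) (L + 2 * n) else ∅ with hGdef
  -- the union of the G's is inside the target event
  have hsub : ∀ p : (Fin L → Bool) × (Fin n → Bool),
      G p ⊆ E ∩ shift^[L + n] ⁻¹' _root_.cylinder c n := by
    rintro ⟨w, v⟩ x hx
    simp only [hGdef] at hx
    by_cases hwE : extL L w ∈ E
    · rw [if_pos hwE] at hx
      constructor
      · refine (hdet x (extL L w) ?_).mpr hwE
        intro i hi
        rw [hx i (by omega)]
        simp [glue, extL, hi]
      · intro i hi
        rw [shift_iterate_apply, hx (i + (L + n)) (by omega)]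
        show (if h : i + (L + n) < L then w ⟨i + (L + n), h⟩
          else if h2 : i + (L + n) - L < n then v ⟨i + (L + n) - L, h2⟩
          else c (i + (L + n) - (L + n))) = c i
        rw [dif_neg (by omega), dif_neg (by omega)]
        congr 1
        omega
    · rw [if_neg hwE] at hx
      exact absurd hx (Set.notMem_empty x)
  -- disjointness of the G's
  have hdisj : Set.PairwiseDisjoint
      (↑(Finset.univ : Finset ((Fin L → Bool) × (Fin n → Bool)))) G := by
    rintro ⟨w, v⟩ - ⟨w', v'⟩ - hne
    simp only [hGdef, Function.onFun]
    split_ifs with h1 h2 h2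
    · apply cylinder_disjoint
      by_contra hcon
      push_neg at hcon
      apply hne
      have hw : w = w' := by
        funext j
        have := hcon j (by omega)
        simpa [glue, j.isLt] using this
      have hv : v = v' := by
        funext j
        have h7 := hcon (L + j) (by omega)
        have hj1 : ¬ (L + (j : ℕ) < L) := by omega
        have hj2 : L + (j : ℕ) - L < n := by omega
        simp only [glue, dif_neg hj1, dif_pos hj2] at h7
        have e : L + (j : ℕ) - L = (j : ℕ) := by omega
        rw [show (⟨L + (j : ℕ) - L, hj2⟩ : Fin n) = ⟨j, j.isLt⟩ by
          apply Fin.ext; simp [e]] at h7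
        simpa using h7
      rw [Prod.mk.injEq]
      exact ⟨hw, hv⟩
    all_goals simp
  -- each G has measure at least D * f * g
  have hterm : ∀ p : (Fin L → Bool) × (Fin n → Bool),
      D * (f p.1 * g p.2) ≤ μ (G p) := by
    rintro ⟨w, v⟩
    simp only [hGdef, hf, hg]
    by_cases hwE : extL L w ∈ E
    · rw [if_pos hwE]
      have hEcyl : _root_.cylinder (extL L w) L ∩ E = _root_.cylinder (extL L w) L := by
        apply Set.inter_eq_self_of_subset_left
        intro x hx
        refine (hdet x (extL L w) ?_).mpr hwE
        intro i hi
        exact hx i hi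
      rw [hEcyl]
      have key := gibbs_mix hG (glue L n c w v) L (2 * n) hL (by omega)
      rw [shift_glue] at key
      rw [cylinder_eq_of_agree (glue_eq_extL_below L n c w v)] at key
      exact key
    · rw [if_neg hwE]
      have hempty : _root_.cylinder (extL L w) L ∩ E = ∅ := by
        apply Set.eq_empty_of_forall_notMem
        rintro x ⟨hx1, hx2⟩
        exact hwE ((hdet x (extL L w) (fun i hi => hx1 i hi)).mp hx2)
      rw [hempty]
      simp
  -- assembling
  have hGmeas : ∀ p ∈ (Finset.univ : Finset ((Fin L → Bool) × (Fin n → Bool))),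
      MeasurableSet (G p) := by
    intro p _
    simp only [hGdef]
    split_ifs
    · exact measurableSet_cylinder _ _
    · exact MeasurableSet.empty
  have hprod : ∑ p : (Fin L → Bool) × (Fin n → Bool), D * (f p.1 * g p.2)
      = D * μ E * μ (_root_.cylinder c n) := by
    rw [measure_eq_sum_cyl μ hE L, measure_cyl_eq_sum_gv hinv c n, ← hf, ← hg]
    rw [← Finset.univ_product_univ, Finset.sum_product]
    simp only [← Finset.mul_sum, ← Finset.sum_mul]
    ring
  calc D * μ E * μ (_root_.cylinder c n)
      = ∑ p : (Fin L → Bool) × (Fin n → Bool), D * (f p.1 * g p.2) := hprod.symm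
    _ ≤ ∑ p : (Fin L → Bool) × (Fin n → Bool), μ (G p) :=
        Finset.sum_le_sum (fun p _ => hterm p)
    _ = μ (⋃ p ∈ (Finset.univ : Finset ((Fin L → Bool) × (Fin n → Bool))), G p) :=
        (MeasureTheory.measure_biUnion_finset hdisj hGmeas).symm
    _ ≤ μ (E ∩ shift^[L + n] ⁻¹' _root_.cylinder c n) :=
        MeasureTheory.measure_mono (Set.iUnion₂_subset (fun p _ => hsub p))

end Aux3
section Aux4
variable {φ : Sig → ℝ} {γ : ℝ} {μ : MeasureTheory.Measure Sig}

/-- The set of points that miss the cylinder `C_n(c)` at all times `2n·i`, `1 ≤ i ≤ m`. -/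
def missSet (c : Sig) (n m : ℕ) : Set Sig :=
  {x : Sig | ∀ i, 1 ≤ i → i ≤ m → shift^[2 * n * i] x ∉ _root_.cylinder c n}

lemma missSet_measurable (c : Sig) (n m : ℕ) : MeasurableSet (missSet c n m) := by
  have : missSet c n m
      = ⋂ i ∈ Finset.Icc 1 m, (shift^[2 * n * i] ⁻¹' _root_.cylinder c n)ᶜ := by
    ext x
    simp only [missSet, Set.mem_iInter, Finset.mem_Icc, Set.mem_compl_iff,
      Set.mem_preimage, Set.mem_setOf_eq]
    constructor
    · intro hx i hi
      exact hx i hi.1 hi.2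
    · intro hx i h1 h2
      exact hx i ⟨h1, h2⟩
  rw [this]
  exact MeasurableSet.biInter (Set.to_countable _)
    (fun i _ => ((measurable_shift.iterate _) (measurableSet_cylinder c n)).compl)

lemma missSet_succ (c : Sig) (n m : ℕ) :
    missSet c n (m + 1)
      = missSet c n m \ (shift^[2 * n * (m + 1)] ⁻¹' _root_.cylinder c n) := by
  ext x
  simp only [missSet, Set.mem_diff, Set.mem_preimage, Set.mem_setOf_eq]
  constructor
  · intro hx
    exact ⟨fun i h1 h2 => hx i h1 (by omega), hx (m + 1) (by omega) le_rfl⟩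
  · rintro ⟨hx, hlast⟩ i h1 h2
    rcases Nat.lt_or_ge i (m + 1) with h | h
    · exact hx i h1 (by omega)
    · have : i = m + 1 := by omega
      rw [this]
      exact hlast

lemma iter_bound (hG : IsGibbs φ γ μ) (c : Sig) (n : ℕ) (hn : 1 ≤ n) (m : ℕ) :
    μ (missSet c n m)
      ≤ (1 - ENNReal.ofReal (γ⁻¹ ^ 3) * μ (_root_.cylinder c n)) ^ m := by
  haveI hprob : MeasureTheory.IsProbabilityMeasure μ := hG.2.1
  set D := ENNReal.ofReal (γ⁻¹ ^ 3) with hD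
  set C := _root_.cylinder c n with hC
  induction m with
  | zero =>
    have : missSet c n 0 = Set.univ := by
      ext x; simp [missSet]; omega
    rw [this, pow_zero]
    exact le_of_eq (MeasureTheory.measure_univ)
  | succ m ih =>
    set E := missSet c n m with hE
    have hEmeas : MeasurableSet E := missSet_measurable c n m
    -- determinedness of E by the first 2nm + n coordinates
    have hdet : ∀ x y : Sig, (∀ i < 2 * n * m + n, x i = y i) → (x ∈ E ↔ y ∈ E) := by
      intro x y hxy
      have key : ∀ i, 1 ≤ i → i ≤ m →
          (shift^[2 * n * i] x ∈ C ↔ shift^[2 * n * i] y ∈ C) := by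
        intro i h1 h2
        constructor <;> intro hmem j hj <;>
          [ (have h8 := hmem j hj;
             rw [shift_iterate_apply] at h8 ⊢;
             rw [← hxy (j + 2 * n * i) (by nlinarith)];
             exact h8);
            (have h8 := hmem j hj;
             rw [shift_iterate_apply] at h8 ⊢;
             rw [hxy (j + 2 * n * i) (by nlinarith)];
             exact h8)]
      constructor <;> intro hmem i h1 h2
      · exact fun hc => hmem i h1 h2 ((key i h1 h2).mpr hc)
      · exact fun hc => hmem i h1 h2 ((key i h1 h2).mp hc)
    have hstep := step_mix hG c n (2 * n * m + n) hn (by omega) hEmeas hdet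
    have harith : 2 * n * m + n + n = 2 * n * (m + 1) := by ring
    rw [harith] at hstep
    set H := shift^[2 * n * (m + 1)] ⁻¹' C with hH
    have hHmeas : MeasurableSet (E ∩ H) :=
      hEmeas.inter ((measurable_shift.iterate _) (measurableSet_cylinder c n))
    have hdiff : μ (missSet c n (m + 1)) = μ E - μ (E ∩ H) := by
      rw [missSet_succ]
      rw [show E \ H = E \ (E ∩ H) by rw [Set.diff_self_inter]]
      exact MeasureTheory.measure_diff Set.inter_subset_left
        hHmeas.nullMeasurableSet (MeasureTheory.measure_ne_top μ _)
    rw [hdiff]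
    calc μ E - μ (E ∩ H)
        ≤ μ E - D * μ E * μ C := tsub_le_tsub_left hstep _
      _ ≤ μ E * (1 - D * μ C) := by
          rw [tsub_le_iff_right]
          calc μ E = μ E * 1 := (mul_one _).symm
            _ ≤ μ E * ((1 - D * μ C) + D * μ C) := by
                gcongr
                exact le_tsub_add
            _ = μ E * (1 - D * μ C) + D * μ E * μ C := by ring
      _ ≤ (1 - D * μ C) ^ m * (1 - D * μ C) := mul_le_mul_left ih _
      _ = (1 - D * μ C) ^ (m + 1) := (pow_succ _ _).symm

/-- Points with late hitting time lie in the miss set. -/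
lemma late_subset_missSet (c : Sig) (n : ℕ) (hn : 1 ≤ n) (K : ℝ) (m : ℕ)
    (hm : ∀ i, 1 ≤ i → i ≤ m → ((2 * n * i : ℕ) : ℝ) ≤ K) :
    {x : Sig | ENNReal.ofReal K < (hitTime x (_root_.cylinder c n) : ℝ≥0∞)}
      ⊆ missSet c n m := by
  intro x hx i h1 h2 hmem
  have hle : hitTime x (_root_.cylinder c n) ≤ ((2 * n * i : ℕ) : ℕ∞) :=
    sInf_le ⟨2 * n * i, rfl, by nlinarith, hmem⟩
  have hle2 : (hitTime x (_root_.cylinder c n) : ℝ≥0∞)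
      ≤ (((2 * n * i : ℕ) : ℕ∞) : ℝ≥0∞) := by
    exact_mod_cast ENat.toENNReal_le.mpr hle
  have hle3 : (((2 * n * i : ℕ) : ℕ∞) : ℝ≥0∞) ≤ ENNReal.ofReal K := by
    rw [ENat.toENNReal_coe, ← ENNReal.ofReal_natCast]
    exact ENNReal.ofReal_le_ofReal (hm i h1 h2)
  have hx' : ENNReal.ofReal K < (hitTime x (_root_.cylinder c n) : ℝ≥0∞) := hx
  exact absurd (lt_of_lt_of_le hx' (hle2.trans hle3)) (lt_irrefl _)

end Aux4
section Aux5

lemma eventually_pow_big (g A C : ℝ) (hg : 0 < g) (hA : 0 ≤ A) (hC : 0 ≤ C) :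
    ∀ᶠ n : ℕ in atTop,
      A * (1 + 2 * (n : ℝ)) + C * (n : ℝ) ^ 2 ≤ (2 : ℝ) ^ (g * (n : ℝ)) := by
  set t := g * Real.log 2 with ht
  have ht0 : 0 < t := mul_pos hg (Real.log_pos one_lt_two)
  have h1 : Tendsto (fun x : ℝ => Real.exp x / x ^ 2) atTop atTop :=
    Real.tendsto_exp_div_pow_atTop 2
  have h2 : Tendsto (fun n : ℕ => t * (n : ℝ)) atTop atTop :=
    Tendsto.const_mul_atTop ht0 tendsto_natCast_atTop_atTop
  have h3 := h1.comp h2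
  have h4 := h3.eventually_ge_atTop ((3 * A + C) / t ^ 2)
  filter_upwards [h4, Filter.eventually_ge_atTop 1] with n hn hn1
  have hn1' : (1 : ℝ) ≤ (n : ℝ) := by exact_mod_cast hn1
  have hnpos : (0 : ℝ) < (n : ℝ) := by linarith
  have hne : (3 * A + C) / t ^ 2 ≤ Real.exp (t * n) / (t * n) ^ 2 := hn
  have hpos : (0 : ℝ) < (t * (n : ℝ)) ^ 2 := by positivity
  have hexp : (3 * A + C) * (n : ℝ) ^ 2 ≤ Real.exp (t * n) := by
    rw [div_le_div_iff₀ (by positivity) hpos] at hne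
    have : (3 * A + C) * (t * n) ^ 2 = ((3 * A + C) * n ^ 2) * t ^ 2 := by ring
    rw [this] at hne
    have ht2 : (0 : ℝ) < t ^ 2 := by positivity
    calc (3 * A + C) * (n : ℝ) ^ 2
        = ((3 * A + C) * n ^ 2 * t ^ 2) / t ^ 2 := by field_simp
      _ ≤ (Real.exp (t * n) * t ^ 2) / t ^ 2 := by gcongr
      _ = Real.exp (t * n) := by field_simp
  have hrw : (2 : ℝ) ^ (g * (n : ℝ)) = Real.exp (t * n) := by
    rw [Real.rpow_def_of_pos (by norm_num : (0:ℝ) < 2)]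
    congr 1
    ring
  rw [hrw]
  refine le_trans ?_ hexp
  nlinarith [sq_nonneg ((n:ℝ) - 1)]

/-- Truncation of a point after the first `n` coordinates. -/
def trunc (n : ℕ) (c : Sig) : Sig := fun i => if i < n then c i else false

lemma cylinder_trunc (n : ℕ) (c : Sig) :
    _root_.cylinder c n = _root_.cylinder (trunc n c) n :=
  cylinder_eq_of_agree (fun i hi => by simp [trunc, hi])

end Aux5
section Main

set_option maxHeartbeats 1600000 in

lemma main12 (φ : Sig → ℝ) (γ : ℝ) (μ : MeasureTheory.Measure Sig)
    (hG : IsGibbs φ γ μ)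
    (h g lam : ℝ) (hh : 0 < h) (hg : 0 < g) (hgh : g ≤ h / 2) (hlam : 0 < lam) :
    ∃ N : ℕ, ∀ n : ℕ, N ≤ n → ∀ 𝒞 : Finset Sig, 𝒞.Nonempty →
      (∀ c ∈ 𝒞, ENNReal.ofReal ((2 : ℝ) ^ (-(h - g) * (n : ℝ))) ≤ μ (_root_.cylinder c n)) →
      μ {x : Sig | ∃ c ∈ 𝒞,
          ENNReal.ofReal ((2 : ℝ) ^ (h * (n : ℝ))) < (hitTime x (_root_.cylinder c n) : ℝ≥0∞)}
        ≤ ENNReal.ofReal ((2 : ℝ) ^ (-lam * (n : ℝ))) := by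
  classical
  have hγ : 1 < γ := hG.1
  have hγ0 : (0 : ℝ) < γ := lt_trans one_pos hγ
  have hγi1 : γ⁻¹ ^ 3 ≤ 1 := pow_le_one₀ (by positivity) (inv_le_one_of_one_le₀ hγ.le)
  have hγi0 : (0 : ℝ) < γ⁻¹ ^ 3 := by positivity
  set Cst := 2 * γ ^ 3 * (1 + lam) * Real.log 2 with hCst
  have hCst0 : 0 ≤ Cst := by
    have := Real.log_pos one_lt_two
    positivity
  obtain ⟨N0, hN0⟩ := Filter.eventually_atTop.mp
    (eventually_pow_big g (γ ^ 3) Cst hg (by positivity) hCst0)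
  refine ⟨max N0 1, fun n hn 𝒞 h𝒞ne h𝒞 => ?_⟩
  have hn1 : 1 ≤ n := le_trans (le_max_right N0 1) hn
  have hn1' : (1 : ℝ) ≤ (n : ℝ) := by exact_mod_cast hn1
  have hbig := hN0 n (le_trans (le_max_left N0 1) hn)
  set X : ℝ := (2 : ℝ) ^ (h * (n : ℝ)) with hX
  have hX0 : 0 ≤ X := (Real.rpow_pos_of_pos (by norm_num) _).le
  set m : ℕ := ⌊X⌋₊ / (2 * n) with hm
  set b : ℝ := γ⁻¹ ^ 3 * (2 : ℝ) ^ (-(h - g) * (n : ℝ)) with hb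
  have hexp_nonpos : -(h - g) * (n : ℝ) ≤ 0 := by nlinarith
  have hrpow_le1 : (2 : ℝ) ^ (-(h - g) * (n : ℝ)) ≤ 1 :=
    Real.rpow_le_one_of_one_le_of_nonpos one_le_two hexp_nonpos
  have hb0 : 0 ≤ b := by positivity
  have hb1 : b ≤ 1 := by
    calc b ≤ γ⁻¹ ^ 3 * 1 := by rw [hb]; gcongr
      _ ≤ 1 := by rw [mul_one]; exact hγi1
  -- Step A : per-cylinder bound
  have stepA : ∀ c : Sig,
      ENNReal.ofReal ((2 : ℝ) ^ (-(h - g) * (n : ℝ))) ≤ μ (_root_.cylinder c n) →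
      μ {x : Sig | ENNReal.ofReal X < (hitTime x (_root_.cylinder c n) : ℝ≥0∞)}
        ≤ ENNReal.ofReal ((1 - b) ^ m) := by
    intro c hc
    have hKi : ∀ i, 1 ≤ i → i ≤ m → ((2 * n * i : ℕ) : ℝ) ≤ X := by
      intro i h1 h2
      have hnat : 2 * n * i ≤ ⌊X⌋₊ := by
        calc 2 * n * i ≤ 2 * n * m := by exact Nat.mul_le_mul_left _ h2
          _ ≤ ⌊X⌋₊ := Nat.mul_div_le _ _
      calc ((2 * n * i : ℕ) : ℝ) ≤ (⌊X⌋₊ : ℝ) := by exact_mod_cast hnat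
        _ ≤ X := Nat.floor_le hX0
    have hsub := late_subset_missSet c n hn1 X m hKi
    have hiter := iter_bound hG c n hn1 m
    have hbD : ENNReal.ofReal b ≤ ENNReal.ofReal (γ⁻¹ ^ 3) * μ (_root_.cylinder c n) := by
      rw [hb, ENNReal.ofReal_mul hγi0.le]
      exact mul_le_mul_right hc _
    have hpow : (1 - ENNReal.ofReal (γ⁻¹ ^ 3) * μ (_root_.cylinder c n)) ^ m
        ≤ ENNReal.ofReal ((1 - b) ^ m) := by
      have h1 : (1 : ℝ≥0∞) - ENNReal.ofReal (γ⁻¹ ^ 3) * μ (_root_.cylinder c n)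
          ≤ ENNReal.ofReal (1 - b) := by
        rw [ENNReal.ofReal_sub _ hb0, ENNReal.ofReal_one]
        exact tsub_le_tsub_left hbD 1
      calc (1 - ENNReal.ofReal (γ⁻¹ ^ 3) * μ (_root_.cylinder c n)) ^ m
          ≤ (ENNReal.ofReal (1 - b)) ^ m := pow_le_pow_left' h1 m
        _ = ENNReal.ofReal ((1 - b) ^ m) := by
              rw [ENNReal.ofReal_pow (by linarith : (0:ℝ) ≤ 1 - b)]
    exact le_trans (MeasureTheory.measure_mono hsub) (le_trans hiter hpow)
  -- Step B : union bound over distinct cylinders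
  set S : Sig → Set Sig :=
    fun c => {x : Sig | ENNReal.ofReal X < (hitTime x (_root_.cylinder c n) : ℝ≥0∞)} with hS
  have hbadeq : {x : Sig | ∃ c ∈ 𝒞,
      ENNReal.ofReal ((2 : ℝ) ^ (h * (n : ℝ))) < (hitTime x (_root_.cylinder c n) : ℝ≥0∞)}
      = ⋃ c' ∈ 𝒞.image (trunc n), S c' := by
    rw [Finset.set_biUnion_finset_image]
    ext x
    simp only [Set.mem_setOf_eq, Set.mem_iUnion, exists_prop, hS, ← hX]
    constructor
    · rintro ⟨c, hc, hx⟩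
      exact ⟨c, hc, by rwa [← cylinder_trunc]⟩
    · rintro ⟨c, hc, hx⟩
      exact ⟨c, hc, by rwa [← cylinder_trunc] at hx⟩
  have hcard : (𝒞.image (trunc n)).card ≤ 2 ^ n := by
    have := Finset.card_le_card_of_injOn (fun c' => (fun i : Fin n => c' i))
      (fun a _ => Finset.mem_univ _)
      (s := 𝒞.image (trunc n)) (t := (Finset.univ : Finset (Fin n → Bool)))
      ?_
    · calc (𝒞.image (trunc n)).card ≤ (Finset.univ : Finset (Fin n → Bool)).card := this
        _ = 2 ^ n := by rw [Finset.card_univ]; simp [Fintype.card_fun]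
    · intro a ha b hb hab
      simp only [Finset.coe_image, Set.mem_image, Finset.mem_coe] at ha hb
      obtain ⟨ca, -, rfl⟩ := ha
      obtain ⟨cb, -, rfl⟩ := hb
      funext i
      rcases lt_or_ge i n with hi | hi
      · exact congrFun hab ⟨i, hi⟩
      · have hni : ¬ i < n := by omega
        simp [trunc, hni]
  have hbad : μ {x : Sig | ∃ c ∈ 𝒞,
      ENNReal.ofReal ((2 : ℝ) ^ (h * (n : ℝ))) < (hitTime x (_root_.cylinder c n) : ℝ≥0∞)}
      ≤ (2 ^ n : ℕ) * ENNReal.ofReal ((1 - b) ^ m) := by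
    rw [hbadeq]
    calc μ (⋃ c' ∈ 𝒞.image (trunc n), S c')
        ≤ ∑ c' ∈ 𝒞.image (trunc n), μ (S c') := MeasureTheory.measure_biUnion_finset_le _ _
      _ ≤ ∑ _c' ∈ 𝒞.image (trunc n), ENNReal.ofReal ((1 - b) ^ m) := by
          apply Finset.sum_le_sum
          intro c' hc'
          apply stepA
          obtain ⟨c, hc, rfl⟩ := Finset.mem_image.mp hc'
          rw [← cylinder_trunc]
          exact h𝒞 c hc
      _ = ((𝒞.image (trunc n)).card : ℝ≥0∞) * ENNReal.ofReal ((1 - b) ^ m) := by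
          rw [Finset.sum_const, nsmul_eq_mul]
      _ ≤ (2 ^ n : ℕ) * ENNReal.ofReal ((1 - b) ^ m) := by
          have hcast : ((𝒞.image (trunc n)).card : ℝ≥0∞) ≤ ((2 ^ n : ℕ) : ℝ≥0∞) := by
            exact_mod_cast hcard
          exact mul_le_mul_left hcast _
  -- Step C : numeric estimate
  have hbm : (1 + lam) * Real.log 2 * (n : ℝ) ≤ b * m := by
    have h2n : (0 : ℝ) < 2 * (n : ℝ) := by linarith
    have hfloor_lt : (⌊X⌋₊ : ℝ) < 2 * n * m + 2 * n := by
      have h1 : (⌊X⌋₊ : ℕ) < 2 * n * (m + 1) :=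
        Nat.lt_mul_div_succ _ (show 0 < 2 * n by omega)
      have h2 : ((⌊X⌋₊ : ℕ) : ℝ) < 2 * n * (m + 1) := by exact_mod_cast h1
      push_cast at h2 ⊢
      linarith
    have hXm : X - 1 - 2 * n < 2 * n * m := by
      have := Nat.sub_one_lt_floor X
      linarith
    have hbX : b * X = γ⁻¹ ^ 3 * (2 : ℝ) ^ (g * (n : ℝ)) := by
      rw [hb, hX, mul_assoc, ← Real.rpow_add (by norm_num : (0:ℝ) < 2)]
      congr 2
      ring
    have hkey : (1 + lam) * Real.log 2 * (n : ℝ) * (2 * n) ≤ b * (2 * n * m) := by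
      have e1 : b * (2 * n * m) ≥ b * (X - 1 - 2 * n) := by
        apply mul_le_mul_of_nonneg_left (le_of_lt hXm) hb0
      have e2 : b * (X - 1 - 2 * n) = b * X - b * (1 + 2 * n) := by ring
      have e3 : b * (1 + 2 * n) ≤ 1 + 2 * n := by
        nlinarith
      have e4 : γ⁻¹ ^ 3 * (2 : ℝ) ^ (g * (n : ℝ))
          ≥ γ⁻¹ ^ 3 * (γ ^ 3 * (1 + 2 * n) + Cst * n ^ 2) := by
        gcongr
      have e5 : γ⁻¹ ^ 3 * (γ ^ 3 * (1 + 2 * n) + Cst * n ^ 2)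
          = (1 + 2 * n) + 2 * (1 + lam) * Real.log 2 * n ^ 2 := by
        rw [hCst]
        field_simp
      have e6 : (1 + lam) * Real.log 2 * (n : ℝ) * (2 * n)
          = 2 * (1 + lam) * Real.log 2 * n ^ 2 := by ring
      nlinarith
    exact le_of_mul_le_mul_right (by linarith [hkey]) h2n
  have hreal : ((2 : ℕ) ^ n : ℝ) * (1 - b) ^ m ≤ (2 : ℝ) ^ (-lam * (n : ℝ)) := by
    have hpow_exp : (1 - b) ^ m ≤ Real.exp (-(b * m)) := by
      calc (1 - b) ^ m ≤ Real.exp (-b) ^ m := by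
            apply pow_le_pow_left₀ (by linarith)
            linarith [Real.add_one_le_exp (-b)]
        _ = Real.exp ((m : ℝ) * (-b)) := (Real.exp_nat_mul _ _).symm
        _ = Real.exp (-(b * m)) := by ring_nf
    have h2n : ((2 : ℕ) ^ n : ℝ) = (2 : ℝ) ^ ((n : ℕ) : ℝ) := by
      rw [Real.rpow_natCast]
      norm_num
    rw [h2n, Real.rpow_def_of_pos (by norm_num : (0:ℝ) < 2),
      Real.rpow_def_of_pos (by norm_num : (0:ℝ) < 2)]
    calc Real.exp (Real.log 2 * (n : ℝ)) * (1 - b) ^ m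
        ≤ Real.exp (Real.log 2 * (n : ℝ)) * Real.exp (-(b * m)) := by
          gcongr
        _ = Real.exp (Real.log 2 * (n : ℝ) - b * m) := by
          rw [← Real.exp_add]; ring_nf
        _ ≤ Real.exp (Real.log 2 * (-lam * (n : ℝ))) := by
          apply Real.exp_le_exp.mpr
          nlinarith [hbm]
  -- conclusion
  calc μ {x : Sig | ∃ c ∈ 𝒞,
      ENNReal.ofReal ((2 : ℝ) ^ (h * (n : ℝ))) < (hitTime x (_root_.cylinder c n) : ℝ≥0∞)}
      ≤ (2 ^ n : ℕ) * ENNReal.ofReal ((1 - b) ^ m) := hbad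
    _ = ENNReal.ofReal (((2 : ℕ) ^ n : ℝ) * (1 - b) ^ m) := by
        rw [ENNReal.ofReal_mul (by positivity)]
        congr 1
        rw [show ((2:ℕ):ℝ) ^ n = ((2 ^ n : ℕ) : ℝ) by push_cast; ring]
        exact (ENNReal.ofReal_natCast _).symm
    _ ≤ ENNReal.ofReal ((2 : ℝ) ^ (-lam * (n : ℝ))) := ENNReal.ofReal_le_ofReal hreal

end Main

/-- Big hitting probability: cylinders of large measure are hit early,
outside a set of exponentially small measure. -/
theorem statement12 (φ : Sig → ℝ) (γ : ℝ) (μ : Measure Sig)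
    (hφ : IsHolder φ) (hG : IsGibbs φ γ μ)
    (h g lam : ℝ) (hh : 0 < h) (hg : 0 < g) (hlam : 0 < lam) :
    ∃ N : ℕ, ∀ n : ℕ, N ≤ n → ∀ 𝒞 : Finset Sig, 𝒞.Nonempty →
      (∀ c ∈ 𝒞, ENNReal.ofReal ((2 : ℝ) ^ (-(h - g) * (n : ℝ))) ≤ μ (cylinder c n)) →
      μ {x : Sig | ∃ c ∈ 𝒞,
          ENNReal.ofReal ((2 : ℝ) ^ (h * (n : ℝ))) < (hitTime x (cylinder c n) : ℝ≥0∞)}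
        ≤ ENNReal.ofReal ((2 : ℝ) ^ (-lam * (n : ℝ))) := by
  set g' := min g (h / 2) with hg'
  have hg'0 : 0 < g' := lt_min hg (by linarith)
  have hg'h : g' ≤ h / 2 := min_le_right _ _
  have hg'g : g' ≤ g := min_le_left _ _
  obtain ⟨N, hN⟩ := main12 φ γ μ hG h g' lam hh hg'0 hg'h hlam
  refine ⟨N, fun n hn 𝒞 h𝒞ne h𝒞 => ?_⟩
  apply hN n hn 𝒞 h𝒞ne
  intro c hc
  refine le_trans ?_ (h𝒞 c hc)
  apply ENNReal.ofReal_le_ofReal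
  apply Real.rpow_le_rpow_of_exponent_le one_le_two
  have hn0 : (0 : ℝ) ≤ (n : ℝ) := Nat.cast_nonneg n
  nlinarith
end

section
/- For every x ∈ Σ and every real number s ≥ 0: dim_H {y ∈ Σ : α(x,y) ≤ s} ≤ s. -/
open Filter MeasureTheory Set
open scoped ENNReal

lemma diam_cyl (w : Sig) (n : ℕ) : EMetric.diam (cylinder w n) ≤ ENNReal.ofReal ((1/2 : ℝ)^n) := by
  apply EMetric.diam_le
  intro y hy z hz
  have h1 : y ∈ PiNat.cylinder w n := hy
  have h2 : z ∈ PiNat.cylinder w n := hz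
  have h3 : y ∈ PiNat.cylinder z n := fun i hi => (h1 i hi).trans (h2 i hi).symm
  have := PiNat.mem_cylinder_iff_dist_le.1 h3
  rw [edist_dist]
  exact ENNReal.ofReal_le_ofReal this

lemma term_bound {s ε : ℝ} (hs : 0 ≤ s) (hε : 0 < ε) (n : ℕ) :
    ((⌈(2:ℝ) ^ ((s+ε)*n)⌉₊ : ℕ) : ℝ≥0∞) * (ENNReal.ofReal ((1/2:ℝ)^n)) ^ (s+2*ε)
      ≤ ENNReal.ofReal 2 * (ENNReal.ofReal ((2:ℝ) ^ (-ε)))^n := by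
  have hhalf : (0:ℝ) < (1/2:ℝ)^n := by positivity
  rw [ENNReal.ofReal_rpow_of_pos hhalf, ← ENNReal.ofReal_natCast,
    ← ENNReal.ofReal_pow (by positivity), ← ENNReal.ofReal_mul (by positivity),
    ← ENNReal.ofReal_mul (by norm_num)]
  apply ENNReal.ofReal_le_ofReal
  have hb : ((1/2:ℝ)^n) = (2:ℝ) ^ (-(n:ℝ)) := by
    rw [Real.rpow_neg (by norm_num), Real.rpow_natCast]
    simp [one_div, inv_pow]
  have hpow : ((1/2:ℝ)^n) ^ (s+2*ε) = (2:ℝ) ^ (-(n:ℝ)*(s+2*ε)) := by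
    rw [hb, ← Real.rpow_mul (by norm_num)]
  have hq : ((2:ℝ) ^ (-ε))^n = (2:ℝ) ^ (-ε * n) := by
    rw [← Real.rpow_natCast ((2:ℝ)^(-ε)) n, ← Real.rpow_mul (by norm_num)]
  rw [hpow, hq]
  have hceil : (⌈(2:ℝ) ^ ((s+ε)*n)⌉₊ : ℝ) ≤ 2 * (2:ℝ) ^ ((s+ε)*n) := by
    have h1 : (1:ℝ) ≤ (2:ℝ) ^ ((s+ε)*n) := by
      calc (1:ℝ) = (2:ℝ) ^ (0:ℝ) := (Real.rpow_zero 2).symm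
        _ ≤ (2:ℝ) ^ ((s+ε)*n) := Real.rpow_le_rpow_of_exponent_le one_le_two (by positivity)
    have h2 : (⌈(2:ℝ) ^ ((s+ε)*n)⌉₊ : ℝ) < (2:ℝ) ^ ((s+ε)*n) + 1 :=
      Nat.ceil_lt_add_one (by positivity)
    linarith
  calc (⌈(2:ℝ) ^ ((s+ε)*n)⌉₊ : ℝ) * (2:ℝ) ^ (-(n:ℝ)*(s+2*ε))
      ≤ (2 * (2:ℝ) ^ ((s+ε)*n)) * (2:ℝ) ^ (-(n:ℝ)*(s+2*ε)) := by gcongr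
    _ = 2 * (2:ℝ) ^ (-ε * n) := by
        rw [mul_assoc, ← Real.rpow_add (by norm_num)]
        ring_nf

lemma hit_extract (x y : Sig) (n : ℕ) (hn : 1 ≤ n) {c : ℝ} (hc : 0 < c)
    (h : elog2 (hitTime x (cylinder y n)) / (n : ℝ≥0∞) < ENNReal.ofReal c) :
    ∃ l : ℕ, 1 ≤ l ∧ (l : ℝ) < 2 ^ (c * n) ∧ y ∈ cylinder (shift^[l] x) n := by
  have hne : (n : ℝ≥0∞) ≠ 0 := Nat.cast_ne_zero.2 (by omega)
  have hnt : (n : ℝ≥0∞) ≠ ⊤ := ENNReal.natCast_ne_top n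
  have hfin : hitTime x (cylinder y n) ≠ ⊤ := by
    intro htop
    rw [htop] at h
    change (⊤ : ℝ≥0∞) / (n : ℝ≥0∞) < ENNReal.ofReal c at h
    rw [ENNReal.top_div_of_ne_top hnt] at h
    exact not_top_lt h
  obtain ⟨l0, hl0⟩ := WithTop.ne_top_iff_exists.1 hfin
  have hone : (1 : ℕ∞) ≤ hitTime x (cylinder y n) := by
    apply le_sInf
    rintro m ⟨l, rfl, hl, -⟩
    exact_mod_cast hl
  have hl01 : 1 ≤ l0 := by
    rw [← hl0] at hone; exact Nat.one_le_cast.mp hone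
  have helog : elog2 (hitTime x (cylinder y n)) = ENNReal.ofReal (Real.logb 2 l0) := by
    rw [← hl0]; rfl
  rw [helog, ENNReal.div_lt_iff (Or.inl hne) (Or.inl hnt)] at h
  have hmul : ENNReal.ofReal c * (n : ℝ≥0∞) = ENNReal.ofReal (c * n) := by
    rw [ENNReal.ofReal_mul hc.le, ENNReal.ofReal_natCast]
  rw [hmul] at h
  have hlogb0 : 0 ≤ Real.logb 2 l0 := by
    apply Real.logb_nonneg one_lt_two
    exact_mod_cast hl01
  have hlog : Real.logb 2 l0 < c * n :=
    (ENNReal.ofReal_lt_ofReal_iff_of_nonneg hlogb0).1 h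
  have hl0lt : (l0 : ℝ) < 2 ^ (c * n) := by
    have hpos : (0 : ℝ) < l0 := by exact_mod_cast hl01
    calc (l0 : ℝ) = 2 ^ (Real.logb 2 l0) := (Real.rpow_logb two_pos (by norm_num) hpos).symm
      _ < 2 ^ (c * n) := Real.rpow_lt_rpow_of_exponent_lt one_lt_two hlog
  have hlt : hitTime x (cylinder y n) < ((l0 + 1 : ℕ) : ℕ∞) := by
    rw [← hl0]; exact Nat.cast_lt.2 (Nat.lt_succ_self l0)
  obtain ⟨m, hmS, hmlt⟩ := sInf_lt_iff.1 hlt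
  obtain ⟨l, rfl, hl1, hlmem⟩ := hmS
  have hll0 : l ≤ l0 := by
    have : l < l0 + 1 := by exact_mod_cast hmlt
    omega
  refine ⟨l, hl1, lt_of_le_of_lt (by exact_mod_cast hll0) hl0lt, ?_⟩
  intro i hi
  exact (hlmem i hi).symm

/-- Upper bound for the dimension of the set of points hit early. -/
theorem statement16 (x : Sig) (s : ℝ) (hs : 0 ≤ s) :
    dimH {y : Sig | alpha x y ≤ ENNReal.ofReal s} ≤ ENNReal.ofReal s := by
  set A := {y : Sig | alpha x y ≤ ENNReal.ofReal s} with hA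
  apply dimH_le
  intro d' hd'
  by_contra hcon
  push_neg at hcon
  have hsd : s < (d' : ℝ) := by
    rwa [ENNReal.ofReal_lt_iff_lt_toReal hs ENNReal.coe_ne_top, ENNReal.coe_toReal] at hcon
  have hd'pos : (0:ℝ) < (d' : ℝ) := lt_of_le_of_lt hs hsd
  set ε : ℝ := ((d':ℝ) - s)/2 with hεdef
  have hε : 0 < ε := by rw [hεdef]; linarith
  have hd : (d' : ℝ) = s + 2*ε := by rw [hεdef]; ring
  set K : ℕ → ℕ := fun n => ⌈(2:ℝ) ^ ((s+ε)*n)⌉₊ with hK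
  set t : ℕ → ℕ × ℕ → Set Sig := fun N p =>
    if 1 ≤ p.2 ∧ p.2 ≤ K (p.1 + N) then cylinder (shift^[p.2] x) (p.1 + N) else ∅ with ht
  set r : ℕ → ℝ≥0∞ := fun N => ENNReal.ofReal ((1/2:ℝ)^N) with hr
  have hr0 : Tendsto r atTop (nhds 0) := by
    rw [hr, ← ENNReal.ofReal_zero]
    exact ENNReal.tendsto_ofReal
      (tendsto_pow_atTop_nhds_zero_of_lt_one (by norm_num) (by norm_num))
  have hdiam : ∀ N, ∀ p : ℕ × ℕ, EMetric.diam (t N p) ≤ r N := by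
    intro N p
    by_cases hp : 1 ≤ p.2 ∧ p.2 ≤ K (p.1 + N)
    · simp only [ht, if_pos hp]
      refine (diam_cyl _ _).trans (ENNReal.ofReal_le_ofReal ?_)
      exact pow_le_pow_of_le_one (by norm_num) (by norm_num) (Nat.le_add_left N p.1)
    · simp [ht, if_neg hp, EMetric.diam, Metric.ediam_empty]
  have hcover : ∀ N, A ⊆ ⋃ p : ℕ × ℕ, t N p := by
    intro N y hy
    have h1 : alpha x y < ENNReal.ofReal (s + ε) := lt_of_le_of_lt hy
      (by rw [ENNReal.ofReal_lt_ofReal_iff (by linarith)]; linarith)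
    have h2 : ∃ᶠ n in atTop,
        elog2 (hitTime x (cylinder y n)) / (n:ℝ≥0∞) < ENNReal.ofReal (s+ε) :=
      Filter.frequently_lt_of_liminf_lt (h := h1)
    obtain ⟨n, hlt, hnN⟩ := (h2.and_eventually (eventually_ge_atTop (N+1))).exists
    obtain ⟨l, hl1, hlK, hmem⟩ := hit_extract x y n (by omega) (by linarith) hlt
    have hlKn : l ≤ K n := by
      have h3 : (l:ℝ) < (K n : ℝ) := lt_of_lt_of_le hlK (Nat.le_ceil _)
      exact_mod_cast h3.le
    refine mem_iUnion.2 ⟨(n - N, l), ?_⟩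
    have hsub : n - N + N = n := Nat.sub_add_cancel (by omega)
    simp only [ht]
    rw [hsub, if_pos ⟨hl1, hlKn⟩]
    exact hmem
  have hle := MeasureTheory.Measure.hausdorffMeasure_le_liminf_tsum (d' : ℝ) A r hr0 t
    (Eventually.of_forall hdiam) (Eventually.of_forall hcover)
  set q : ℝ≥0∞ := ENNReal.ofReal ((2:ℝ)^(-ε)) with hq
  have hq1 : q < 1 := by
    rw [hq, ← ENNReal.ofReal_one]
    apply (ENNReal.ofReal_lt_ofReal_iff one_pos).2
    calc (2:ℝ)^(-ε) < (2:ℝ)^(0:ℝ) :=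
          Real.rpow_lt_rpow_of_exponent_lt one_lt_two (by linarith)
      _ = 1 := Real.rpow_zero 2
  have hSbound : ∀ N, (∑' p : ℕ×ℕ, EMetric.diam (t N p) ^ (d' : ℝ))
      ≤ ENNReal.ofReal 2 * q^N * (1 - q)⁻¹ := by
    intro N
    rw [ENNReal.tsum_prod']
    have inner : ∀ m, (∑' l : ℕ, EMetric.diam (t N (m, l)) ^ (d' : ℝ))
        ≤ ENNReal.ofReal 2 * q^(m+N) := by
      intro m
      have h1 : (∑' l : ℕ, EMetric.diam (t N (m, l)) ^ (d' : ℝ))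
          = ∑ l ∈ Finset.Icc 1 (K (m+N)), EMetric.diam (t N (m, l)) ^ (d' : ℝ) := by
        apply tsum_eq_sum
        intro l hl
        rw [Finset.mem_Icc] at hl
        have hemp : t N (m, l) = ∅ := by
          simp only [ht]
          rw [if_neg]
          intro hcond
          exact hl ⟨hcond.1, hcond.2⟩
        rw [hemp]
        simp only [EMetric.diam, Metric.ediam_empty]
        exact ENNReal.zero_rpow_of_pos hd'pos
      rw [h1]
      have h2 : ∀ l ∈ Finset.Icc 1 (K (m+N)), EMetric.diam (t N (m,l)) ^ (d' : ℝ)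
          ≤ (ENNReal.ofReal ((1/2:ℝ)^(m+N))) ^ (d' : ℝ) := by
        intro l hl
        rw [Finset.mem_Icc] at hl
        apply ENNReal.rpow_le_rpow ?_ hd'pos.le
        simp only [ht]
        rw [if_pos ⟨hl.1, hl.2⟩]
        exact diam_cyl _ _
      calc ∑ l ∈ Finset.Icc 1 (K (m+N)), EMetric.diam (t N (m, l)) ^ (d' : ℝ)
          ≤ (Finset.Icc 1 (K (m+N))).card •
              (ENNReal.ofReal ((1/2:ℝ)^(m+N))) ^ (d' : ℝ) :=
            Finset.sum_le_card_nsmul _ _ _ h2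
        _ = (K (m+N) : ℝ≥0∞) * (ENNReal.ofReal ((1/2:ℝ)^(m+N))) ^ (d' : ℝ) := by
            rw [Nat.card_Icc]
            simp [nsmul_eq_mul]
        _ ≤ ENNReal.ofReal 2 * q^(m+N) := by
            rw [hd]
            exact term_bound hs hε (m+N)
    calc (∑' m, ∑' l : ℕ, EMetric.diam (t N (m, l)) ^ (d' : ℝ))
        ≤ ∑' m : ℕ, ENNReal.ofReal 2 * q^(m+N) := ENNReal.tsum_le_tsum inner
      _ = ∑' m : ℕ, (ENNReal.ofReal 2 * q^N) * q^m := by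
          congr 1
          funext m
          rw [pow_add]
          ring
      _ = (ENNReal.ofReal 2 * q^N) * ∑' m : ℕ, q^m := ENNReal.tsum_mul_left
      _ = ENNReal.ofReal 2 * q^N * (1 - q)⁻¹ := by rw [ENNReal.tsum_geometric]
  have hC : ENNReal.ofReal 2 * (1 - q)⁻¹ ≠ ⊤ :=
    ENNReal.mul_ne_top ENNReal.ofReal_ne_top (ENNReal.inv_ne_top.2 (tsub_pos_of_lt hq1).ne')
  have htend : Tendsto (fun N : ℕ => ENNReal.ofReal 2 * q^N * (1-q)⁻¹) atTop (nhds 0) := by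
    have h0 : Tendsto (fun N : ℕ => q^N) atTop (nhds 0) :=
      ENNReal.tendsto_pow_atTop_nhds_zero_of_lt_one hq1
    have h1 : Tendsto (fun N : ℕ => q^N * (ENNReal.ofReal 2 * (1-q)⁻¹)) atTop (nhds 0) := by
      have := ENNReal.Tendsto.mul_const h0 (Or.inr hC)
      simpa using this
    refine h1.congr (fun N => ?_)
    ring
  have hμ : μH[(d' : ℝ)] A = 0 := by
    refine le_antisymm ?_ zero_le
    refine hle.trans ?_
    calc Filter.atTop.liminf (fun N => ∑' p : ℕ×ℕ, EMetric.diam (t N p) ^ (d' : ℝ))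
        ≤ Filter.atTop.liminf (fun N : ℕ => ENNReal.ofReal 2 * q^N * (1-q)⁻¹) :=
          liminf_le_liminf (Eventually.of_forall hSbound)
      _ = 0 := htend.liminf_eq
  rw [hμ] at hd'
  exact ENNReal.zero_ne_top hd'
end
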